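/- arXiv:0906.3530 — 11 statements merged into one kernel-verified Lean document; each statement's English description precedes it below -/
import Mathlib

section
/- If G is a graph with n vertices and m ≥ 12n edges, then G contains at least m³/(16n²) paths of length three. -/
open Finset

namespace Stmt0Aux

variable {V : Type*} [Fintype V] [DecidableEq V] (G : SimpleGraph V) [DecidableRel G.Adj]

/-- degree of `v` within vertex set `s` -/
def dt (s : Finset V) (v : V) : ℕ := (s.filter (G.Adj v)).card

/-- number of ordered adjacent pairs within `s` -/
def Es (s : Finset V) : ℕ := ((s ×ˢ s).filter (fun p => G.Adj p.1 p.2)).card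

lemma Es_eq_sum (s : Finset V) : Es G s = ∑ v ∈ s, dt G s v := by
  simp only [Es, dt, card_filter, Finset.sum_product]

lemma Es_univ : Es G Finset.univ = 2 * G.edgeFinset.card := by
  rw [Es_eq_sum]
  have hdeg : ∀ v : V, dt G Finset.univ v = G.degree v := by
    intro v
    rw [dt, ← SimpleGraph.neighborFinset_eq_filter, SimpleGraph.degree]
  simp only [hdeg]
  exact G.sum_degrees_eq_twice_card_edges

lemma Es_erase {s : Finset V} {v : V} (hv : v ∈ s) :
    Es G s ≤ Es G (s.erase v) + 2 * dt G s v := by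
  have hsub : (s ×ˢ s).filter (fun p => G.Adj p.1 p.2) ⊆
      (((s.erase v) ×ˢ (s.erase v)).filter (fun p => G.Adj p.1 p.2) ∪
        {v} ×ˢ s.filter (G.Adj v)) ∪ (s.filter (fun u => G.Adj u v)) ×ˢ {v} := by
    intro p hp
    simp only [mem_filter, mem_product, mem_union, mem_singleton, mem_erase] at *
    obtain ⟨⟨h1, h2⟩, hadj⟩ := hp
    by_cases e1 : p.1 = v
    · exact Or.inl (Or.inr ⟨e1, h2, e1 ▸ hadj⟩)
    · by_cases e2 : p.2 = v
      · exact Or.inr ⟨⟨h1, e2 ▸ hadj⟩, e2⟩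
      · exact Or.inl (Or.inl ⟨⟨⟨e1, h1⟩, ⟨e2, h2⟩⟩, hadj⟩)
  have hcard := (Finset.card_le_card hsub).trans
    ((Finset.card_union_le _ _).trans
      (Nat.add_le_add_right (Finset.card_union_le _ _) _))
  have h1 : ({v} ×ˢ s.filter (G.Adj v)).card = dt G s v := by
    rw [Finset.card_product, Finset.card_singleton, one_mul, dt]
  have h2 : ((s.filter (fun u => G.Adj u v)) ×ˢ ({v} : Finset V)).card = dt G s v := by
    rw [Finset.card_product, Finset.card_singleton, mul_one, dt]
    congr 1
    apply Finset.filter_congr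
    intro u _
    simp [G.adj_comm]
  rw [Es, Es]
  omega

lemma extract (D : ℕ) (hD : 1 ≤ D) :
    ∀ s : Finset V, ∃ t, t ⊆ s ∧ (∀ v ∈ t, D ≤ dt G t v) ∧
      Es G s ≤ Es G t + 2 * (D - 1) * s.card := by
  intro s
  induction s using Finset.strongInductionOn with
  | _ s ih =>
    by_cases hall : ∀ v ∈ s, D ≤ dt G s v
    · exact ⟨s, Finset.Subset.refl s, hall, Nat.le_add_right _ _⟩
    · push_neg at hall
      obtain ⟨v, hv, hdeg⟩ := hall
      obtain ⟨t, hts, hmin, hE⟩ := ih (s.erase v) (Finset.erase_ssubset hv)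
      refine ⟨t, hts.trans (Finset.erase_subset _ _), hmin, ?_⟩
      have h1 : Es G s ≤ Es G (s.erase v) + 2 * dt G s v := Es_erase G hv
      have hcard : (s.erase v).card = s.card - 1 := Finset.card_erase_of_mem hv
      have hc1 : 1 ≤ s.card := Finset.card_pos.mpr ⟨v, hv⟩
      rw [hcard] at hE
      have hdv : dt G s v ≤ D - 1 := by omega
      have key : 2 * (D - 1) * (s.card - 1) + 2 * (D - 1) = 2 * (D - 1) * s.card := by
        have hsc : s.card - 1 + 1 = s.card := Nat.succ_pred_eq_of_pos hc1
        conv_rhs => rw [← hsc]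
        rw [Nat.mul_add, Nat.mul_one]
      omega

lemma count (t : Finset V) (D : ℕ) (hmin : ∀ v ∈ t, D ≤ dt G t v) :
    Es G t * ((D - 1) * (D - 2)) ≤
      ((t ×ˢ t ×ˢ t ×ˢ t).filter (fun p : V × V × V × V =>
        G.Adj p.1 p.2.1 ∧ G.Adj p.2.1 p.2.2.1 ∧ G.Adj p.2.2.1 p.2.2.2 ∧
        p.1 ≠ p.2.2.1 ∧ p.1 ≠ p.2.2.2 ∧ p.2.1 ≠ p.2.2.2)).card := by
  rw [card_filter]
  simp only [Finset.sum_product]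
  have key : ∀ u ∈ t, ∀ v ∈ t, G.Adj u v →
      (D - 1) * (D - 2) ≤ ∑ x ∈ t, ∑ w ∈ t,
        (if G.Adj x u ∧ G.Adj u v ∧ G.Adj v w ∧ x ≠ v ∧ x ≠ w ∧ u ≠ w then 1 else 0) := by
    intro u hu v hv huv
    set A := (t.filter (G.Adj u)).erase v with hA
    have hAsub : A ⊆ t := by
      intro x hx
      exact (Finset.mem_filter.mp (Finset.mem_of_mem_erase hx)).1
    have hAcard : D - 1 ≤ A.card := by
      have h1 : D ≤ (t.filter (G.Adj u)).card := hmin u hu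
      have h2 := Finset.pred_card_le_card_erase (s := t.filter (G.Adj u)) (a := v)
      rw [hA]
      omega
    have step1 : ∀ x ∈ A, (D - 2 : ℕ) ≤ ∑ w ∈ t,
        (if G.Adj x u ∧ G.Adj u v ∧ G.Adj v w ∧ x ≠ v ∧ x ≠ w ∧ u ≠ w then 1 else 0) := by
      intro x hx
      obtain ⟨hxv, hxt'⟩ := Finset.mem_erase.mp hx
      obtain ⟨hxt, hux⟩ := Finset.mem_filter.mp hxt'
      set B := ((t.filter (G.Adj v)).erase u).erase x with hB
      have hBsub : B ⊆ t := by
        intro w hw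
        exact (Finset.mem_filter.mp
          (Finset.mem_of_mem_erase (Finset.mem_of_mem_erase hw))).1
      have hBcard : D - 2 ≤ B.card := by
        have h1 : D ≤ (t.filter (G.Adj v)).card := hmin v hv
        have h2 := Finset.pred_card_le_card_erase (s := t.filter (G.Adj v)) (a := u)
        have h3 := Finset.pred_card_le_card_erase
          (s := (t.filter (G.Adj v)).erase u) (a := x)
        rw [hB]
        omega
      calc D - 2 ≤ B.card := hBcard
        _ = ∑ w ∈ B,
            (if G.Adj x u ∧ G.Adj u v ∧ G.Adj v w ∧ x ≠ v ∧ x ≠ w ∧ u ≠ w then 1 else 0) := by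
            rw [Finset.card_eq_sum_ones]
            refine Finset.sum_congr rfl fun w hw => ?_
            obtain ⟨hwx, hw2⟩ := Finset.mem_erase.mp hw
            obtain ⟨hwu, hw3⟩ := Finset.mem_erase.mp hw2
            obtain ⟨hwt, hvw⟩ := Finset.mem_filter.mp hw3
            rw [if_pos ⟨hux.symm, huv, hvw, hxv, (Ne.symm hwx), (Ne.symm hwu)⟩]
        _ ≤ _ := Finset.sum_le_sum_of_subset hBsub
    calc (D - 1) * (D - 2) ≤ A.card * (D - 2) := Nat.mul_le_mul_right _ hAcard
      _ = ∑ _x ∈ A, (D - 2) := by rw [Finset.sum_const, smul_eq_mul]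
      _ ≤ ∑ x ∈ A, ∑ w ∈ t,
          (if G.Adj x u ∧ G.Adj u v ∧ G.Adj v w ∧ x ≠ v ∧ x ≠ w ∧ u ≠ w then 1 else 0) :=
          Finset.sum_le_sum step1
      _ ≤ _ := Finset.sum_le_sum_of_subset hAsub
  calc Es G t * ((D - 1) * (D - 2))
      = ∑ u ∈ t, ∑ v ∈ t, (if G.Adj u v then (D - 1) * (D - 2) else 0) := by
        simp only [Es, card_filter, Finset.sum_product, Finset.sum_mul, ite_mul,
          one_mul, zero_mul]
    _ ≤ ∑ u ∈ t, ∑ v ∈ t, ∑ x ∈ t, ∑ w ∈ t,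
        (if G.Adj x u ∧ G.Adj u v ∧ G.Adj v w ∧ x ≠ v ∧ x ≠ w ∧ u ≠ w then 1 else 0) := by
        refine Finset.sum_le_sum fun u hu => Finset.sum_le_sum fun v hv => ?_
        by_cases hadj : G.Adj u v
        · rw [if_pos hadj]; exact key u hu v hv hadj
        · rw [if_neg hadj]; exact Nat.zero_le _
    _ = ∑ u ∈ t, ∑ x ∈ t, ∑ v ∈ t, ∑ w ∈ t,
        (if G.Adj x u ∧ G.Adj u v ∧ G.Adj v w ∧ x ≠ v ∧ x ≠ w ∧ u ≠ w then 1 else 0) :=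
        Finset.sum_congr rfl fun u _ => Finset.sum_comm
    _ = ∑ x ∈ t, ∑ u ∈ t, ∑ v ∈ t, ∑ w ∈ t,
        (if G.Adj x u ∧ G.Adj u v ∧ G.Adj v w ∧ x ≠ v ∧ x ≠ w ∧ u ≠ w then 1 else 0) :=
        Finset.sum_comm

end Stmt0Aux

/-- If G is a graph with n vertices and m ≥ 12n edges, then G contains
at least m³/(16n²) paths of length three (paths counted unordered, so the number of
ordered paths divided by 2). -/
theorem stmt_0 {V : Type*} [Fintype V] [DecidableEq V] (G : SimpleGraph V)
    [DecidableRel G.Adj] (n m : ℕ) (hn : n = Fintype.card V)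
    (hm : m = G.edgeFinset.card) (h : 12 * n ≤ m) :
    (m : ℝ) ^ 3 / (16 * (n : ℝ) ^ 2) ≤
      ((Finset.univ.filter (fun p : V × V × V × V =>
        G.Adj p.1 p.2.1 ∧ G.Adj p.2.1 p.2.2.1 ∧ G.Adj p.2.2.1 p.2.2.2 ∧
        p.1 ≠ p.2.2.1 ∧ p.1 ≠ p.2.2.2 ∧ p.2.1 ≠ p.2.2.2)).card : ℝ) / 2 := by
  open Stmt0Aux in
  rcases Nat.eq_zero_or_pos n with hn0 | hnpos
  · -- degenerate case: no vertices, hence no edges, LHS = 0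
    have hVempty : IsEmpty V := by
      rw [hn0] at hn; exact Fintype.card_eq_zero_iff.mp hn.symm
    have hm0 : m = 0 := by
      rw [hm, Finset.card_eq_zero, Finset.eq_empty_iff_forall_notMem]
      intro e he
      induction e using Sym2.ind with
      | _ a b => exact hVempty.elim a
    rw [hm0]
    have hzero : ((0:ℕ):ℝ) ^ 3 / (16 * (n:ℝ) ^ 2) = 0 := by norm_num
    rw [hzero]
    positivity
  · set k := m / (2 * n) with hk
    clear_value k
    have h2n : 0 < 2 * n := by omega
    have hk6 : 6 ≤ k := by
      rw [hk, Nat.le_div_iff_mul_le h2n]; omega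
    obtain ⟨t, hts, hmin, hE⟩ := Stmt0Aux.extract G (k + 1) (by omega) Finset.univ
    have hEuniv : Es G Finset.univ = 2 * m := by rw [Es_univ, hm]
    have hcard_univ : (Finset.univ : Finset V).card = n := by rw [hn, Finset.card_univ]
    have hEt : 2 * m ≤ Es G t + 2 * k * n := by
      rw [← hEuniv]
      simpa [hcard_univ] using hE
    have hcount := Stmt0Aux.count G t (k + 1) hmin
    have hsimp1 : k + 1 - 1 = k := by omega
    have hsimp2 : k + 1 - 2 = k - 1 := by omega
    rw [hsimp1, hsimp2] at hcount
    have hsub : (t ×ˢ t ×ˢ t ×ˢ t).filter (fun p : V × V × V × V =>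
        G.Adj p.1 p.2.1 ∧ G.Adj p.2.1 p.2.2.1 ∧ G.Adj p.2.2.1 p.2.2.2 ∧
        p.1 ≠ p.2.2.1 ∧ p.1 ≠ p.2.2.2 ∧ p.2.1 ≠ p.2.2.2) ⊆
        Finset.univ.filter (fun p : V × V × V × V =>
        G.Adj p.1 p.2.1 ∧ G.Adj p.2.1 p.2.2.1 ∧ G.Adj p.2.2.1 p.2.2.2 ∧
        p.1 ≠ p.2.2.1 ∧ p.1 ≠ p.2.2.2 ∧ p.2.1 ≠ p.2.2.2) :=
      Finset.filter_subset_filter _ (Finset.subset_univ _)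
    have hPnat : Es G t * (k * (k - 1)) ≤
        (Finset.univ.filter (fun p : V × V × V × V =>
        G.Adj p.1 p.2.1 ∧ G.Adj p.2.1 p.2.2.1 ∧ G.Adj p.2.2.1 p.2.2.2 ∧
        p.1 ≠ p.2.2.1 ∧ p.1 ≠ p.2.2.2 ∧ p.2.1 ≠ p.2.2.2)).card :=
      hcount.trans (Finset.card_le_card hsub)
    -- now real arithmetic
    set C : ℝ := ((Finset.univ.filter (fun p : V × V × V × V =>
        G.Adj p.1 p.2.1 ∧ G.Adj p.2.1 p.2.2.1 ∧ G.Adj p.2.2.1 p.2.2.2 ∧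
        p.1 ≠ p.2.2.1 ∧ p.1 ≠ p.2.2.2 ∧ p.2.1 ≠ p.2.2.2)).card : ℝ) with hC
    clear_value C
    have hnR : (0:ℝ) < n := by exact_mod_cast hnpos
    have h2nR : (0:ℝ) < 2 * n := by linarith
    have hmR : (0:ℝ) ≤ m := Nat.cast_nonneg m
    set K : ℝ := (k : ℝ) with hKdef
    clear_value K
    have hK6 : (6:ℝ) ≤ K := by rw [hKdef]; exact_mod_cast hk6
    have hKle : K * (2 * n) ≤ m := by
      have h1 : k * (2 * n) ≤ m := by rw [hk]; exact Nat.div_mul_le_self m (2 * n)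
      rw [hKdef]
      exact_mod_cast h1
    have hKgt : (m:ℝ) < (K + 1) * (2 * n) := by
      have hdm := Nat.div_add_mod m (2 * n)
      have hmod := Nat.mod_lt m h2n
      rw [← hk] at hdm
      have hlt : m < 2 * n * k + 2 * n := by omega
      have hltR : (m:ℝ) < 2 * n * (k:ℝ) + 2 * n := by exact_mod_cast hlt
      rw [hKdef]
      linarith
    set q : ℝ := (m : ℝ) / (2 * n) with hqdef
    clear_value q
    have hq6 : (6:ℝ) ≤ q := by
      rw [hqdef, le_div_iff₀ h2nR]
      have h12 : (12 * n : ℝ) ≤ m := by exact_mod_cast h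
      linarith
    have hqlt : q < K + 1 := by
      rw [hqdef, div_lt_iff₀ h2nR]
      exact hKgt
    have hKq : q - 1 ≤ K := by linarith
    have hqK : K ≤ q := by
      rw [hqdef, le_div_iff₀ h2nR]
      exact hKle
    have hEtR : (m:ℝ) ≤ (Es G t : ℝ) := by
      have h1 : (2 * m : ℝ) ≤ (Es G t : ℝ) + 2 * K * n := by
        rw [hKdef]
        exact_mod_cast hEt
      nlinarith [hKle]
    have hPR : (Es G t : ℝ) * (K * (K - 1)) ≤ C := by
      rw [hKdef, hC]
      have h1 : ((k:ℝ) - 1) = ((k - 1 : ℕ) : ℝ) := by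
        rw [Nat.cast_sub (by omega : 1 ≤ k)]
        norm_num
      rw [h1]
      exact_mod_cast hPnat
    clear hsub hPnat hcount hE hC hmin hts
    have hKK : (q - 1) * (q - 2) ≤ K * (K - 1) := by
      have h1 : (0:ℝ) ≤ q - 1 := by linarith
      have h2 : (0:ℝ) ≤ q - 2 := by linarith
      have h3 : q - 2 ≤ K - 1 := by linarith
      exact mul_le_mul hKq h3 h2 (by linarith : (0:ℝ) ≤ K)
    have hqq : (5/9 : ℝ) * q ^ 2 ≤ (q - 1) * (q - 2) := by
      nlinarith [hq6, sq_nonneg (q - 6)]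
    have hmain : (m : ℝ) * ((5/9) * q ^ 2) ≤ C := by
      have s1 : (m : ℝ) * ((5/9) * q ^ 2) ≤ (m : ℝ) * (K * (K - 1)) := by
        apply mul_le_mul_of_nonneg_left _ hmR
        linarith
      have s2 : (m : ℝ) * (K * (K - 1)) ≤ (Es G t : ℝ) * (K * (K - 1)) :=
        mul_le_mul_of_nonneg_right hEtR
          (mul_nonneg (by linarith) (by linarith))
      linarith
    have hCge : 5 * (m:ℝ)^3 ≤ C * (36 * n^2) := by
      have heq : (m:ℝ) * (5 / 9 * q ^ 2) * (36 * n ^ 2) = 5 * (m:ℝ) ^ 3 := by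
        rw [hqdef]
        field_simp
        ring
      have hstep := mul_le_mul_of_nonneg_right hmain
        (by positivity : (0:ℝ) ≤ 36 * n ^ 2)
      rw [heq] at hstep
      exact hstep
    rw [div_le_div_iff₀ (by positivity) (by norm_num : (0:ℝ) < 2)]
    have hm3 : (0:ℝ) ≤ (m:ℝ)^3 := by positivity
    nlinarith only [hCge, hm3]
end

section
/- For a graph G and vertices v and w at distance at most d, the induced subgraph G_d(v,w) consisting of all vertices of G that lie on a walk from v to w of length at most d has diameter at most d. -/
/-!
If `a` lies on a walk `p` from `v` to `w` and `b` on a walk `q` from `v` to `w`, splitting `p` at `a`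
and `q` at `b` yields two walks from `a` to `b`, one through `v` and one through `w`, whose lengths
add up to `p.length + q.length ≤ 2 d`. The shorter one has length at most `d`, and it only visits
vertices of `p` and `q`, so it is a walk in `G_d(v,w)`.
-/

namespace SimpleGraph.Walk

variable {V : Type*} {G : SimpleGraph V}

lemma length_induce {s : Set V} {u v : V} (p : G.Walk u v) (hp : ∀ x ∈ p.support, x ∈ s) :
    (p.induce s hp).length = p.length := by
  rw [← length_map (Embedding.induce s).toHom, map_induce]
  rfl

lemma edist_induce_le_length {s : Set V} {u v : V} (p : G.Walk u v)
    (hp : ∀ x ∈ p.support, x ∈ s) :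
    (G.induce s).edist ⟨u, hp _ p.start_mem_support⟩ ⟨v, hp _ p.end_mem_support⟩ ≤ p.length := by
  simpa only [length_induce] using edist_le (p.induce s hp)

lemma exists_walk_two_mul_length_le [DecidableEq V] {v w a b : V} (p q : G.Walk v w)
    (ha : a ∈ p.support) (hb : b ∈ q.support) :
    ∃ r : G.Walk a b, 2 * r.length ≤ p.length + q.length ∧
      ∀ x ∈ r.support, x ∈ p.support ∨ x ∈ q.support := by
  let viaStart := (p.takeUntil a ha).reverse.append (q.takeUntil b hb)
  let viaEnd := (p.dropUntil a ha).append (q.dropUntil b hb).reverse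
  have hlength : viaStart.length + viaEnd.length = p.length + q.length := by
    have hp := congrArg length (p.take_spec ha)
    have hq := congrArg length (q.take_spec hb)
    simp only [viaStart, viaEnd, length_append, length_reverse] at hp hq ⊢
    omega
  rcases le_total viaStart.length viaEnd.length with hle | hle
  · refine ⟨viaStart, by omega, fun x hx => ?_⟩
    simp only [viaStart, mem_support_append_iff, support_reverse, List.mem_reverse] at hx
    exact hx.imp (fun h => p.support_takeUntil_subset_support ha h)
      (fun h => q.support_takeUntil_subset_support hb h)
  · refine ⟨viaEnd, by omega, fun x hx => ?_⟩
    simp only [viaEnd, mem_support_append_iff, support_reverse, List.mem_reverse] at hx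
    exact hx.imp (fun h => p.support_dropUntil_subset_support ha h)
      (fun h => q.support_dropUntil_subset_support hb h)

end SimpleGraph.Walk

open SimpleGraph.Walk in
theorem stmt_1_general {V : Type*} (G : SimpleGraph V) (v w : V) (d : ℕ)
    (S : Set V) (hS : S = {u : V | ∃ p : G.Walk v w, p.length ≤ d ∧ u ∈ p.support}) :
    ∀ a b : S, (G.induce S).edist a b ≤ d := by
  classical
  subst hS
  rintro ⟨a, p, hpd, ha⟩ ⟨b, q, hqd, hb⟩
  obtain ⟨r, hr, hsupp⟩ := exists_walk_two_mul_length_le p q ha hb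
  have hrS : ∀ x ∈ r.support, ∃ t : G.Walk v w, t.length ≤ d ∧ x ∈ t.support :=
    fun x hx => (hsupp x hx).elim (fun h => ⟨p, hpd, h⟩) (fun h => ⟨q, hqd, h⟩)
  calc _ ≤ (r.length : ℕ∞) := edist_induce_le_length r hrS
    _ ≤ d := by exact_mod_cast (by omega : r.length ≤ d)

/-- For a graph G and vertices v, w at distance at most d, the induced
subgraph G_d(v,w) on all vertices lying on a walk from v to w of length at most d
has diameter at most d. -/
theorem stmt_1 {V : Type*} (G : SimpleGraph V) (v w : V) (d : ℕ)
    (h : ∃ p : G.Walk v w, p.length ≤ d)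
    (S : Set V) (hS : S = {u : V | ∃ p : G.Walk v w, p.length ≤ d ∧ u ∈ p.support}) :
    ∀ a b : S, (G.induce S).edist a b ≤ d :=
  stmt_1_general G v w d S hS
end

section
/- If a graph G has n vertices and m ≥ 12n edges, then G contains an induced subgraph H with at least m³/(32n⁴) edges whose diameter is at most 3. -/
/-! Let `A` be the adjacency matrix. Cauchy–Schwarz, applied to the row sums of `A` and then to
the entries of `A²`, gives `(2m)⁴ = (∑ A)⁴ ≤ n⁴ tr A⁴`. Since `tr A⁴ = ∑_{u ~ w} (A³)_{wu}` has
`2m` terms, some edge `uw` has `n⁴ (A³)_{uw} ≥ 8m³`. Now `(A³)_{uw}` counts the adjacent pairs in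
`N(u) × N(w)`, so it is at most twice the number of edges spanned by `s = N(u) ∪ N(w)`, and in
`G[s]` every vertex is adjacent to `u` or `w`, so its diameter is at most 3. -/

open Finset

namespace Matrix

variable {ι R : Type*} [Fintype ι]

theorem IsSymm.sum_mul_self_apply [CommSemiring R] {M : Matrix ι ι R} (hM : M.IsSymm) :
    ∑ i, ∑ j, (M * M) i j = ∑ i, (∑ j, M i j) ^ 2 := by
  simp_rw [mul_apply, sq, sum_mul_sum]
  conv_lhs => enter [2, i]; rw [sum_comm]
  rw [sum_comm]
  simp_rw [hM.apply]

theorem IsSymm.sum_apply_sq [CommSemiring R] {M : Matrix ι ι R} (hM : M.IsSymm) :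
    ∑ i, ∑ j, M i j ^ 2 = trace (M * M) := by
  simp only [trace, diag, mul_apply, sq, hM.apply]

theorem IsSymm.sum_apply_pow_four_le [DecidableEq ι] [CommRing R] [LinearOrder R]
    [IsStrictOrderedRing R] {M : Matrix ι ι R} (hM : M.IsSymm) :
    (∑ i, ∑ j, M i j) ^ 4 ≤ (Fintype.card ι : R) ^ 4 * trace (M ^ 4) := by
  have hrows : (∑ i, ∑ j, M i j) ^ 2 ≤ Fintype.card ι * ∑ i, (∑ j, M i j) ^ 2 := by
    simpa using sq_sum_le_card_mul_sum_sq (s := univ) (f := fun i => ∑ j, M i j)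
  have hentries :
      (∑ i, (∑ j, M i j) ^ 2) ^ 2 ≤ (Fintype.card ι : R) ^ 2 * trace (M ^ 4) := by
    have hM2 : (M * M).IsSymm := by simpa only [sq] using hM.pow 2
    rw [← hM.sum_mul_self_apply, show M ^ 4 = M * M * (M * M) by noncomm_ring,
      ← hM2.sum_apply_sq]
    simpa [Fintype.sum_prod_type, sq] using
      sq_sum_le_card_mul_sum_sq (s := univ) (f := fun p : ι × ι => (M * M) p.1 p.2)
  calc (∑ i, ∑ j, M i j) ^ 4 = ((∑ i, ∑ j, M i j) ^ 2) ^ 2 := by ring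
    _ ≤ (Fintype.card ι * ∑ i, (∑ j, M i j) ^ 2) ^ 2 := by gcongr
    _ = (Fintype.card ι : R) ^ 2 * (∑ i, (∑ j, M i j) ^ 2) ^ 2 := by ring
    _ ≤ (Fintype.card ι : R) ^ 4 * trace (M ^ 4) := by
      rw [show (Fintype.card ι : R) ^ 4 = Fintype.card ι ^ 2 * Fintype.card ι ^ 2 by ring,
        mul_assoc]
      gcongr

end Matrix

namespace SimpleGraph

variable {V : Type*}

theorem ediam_le_three_of_adj_of_forall_adj_or_adj {H : SimpleGraph V} {u w : V}
    (huw : H.Adj u w) (hdom : ∀ v, H.Adj u v ∨ H.Adj w v) : H.ediam ≤ 3 := by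
  have hnear : ∀ v, ∃ x, (x = u ∨ x = w) ∧ H.edist v x ≤ 1 := fun v =>
    (hdom v).elim (fun h => ⟨u, .inl rfl, (edist_eq_one_iff_adj.mpr h.symm).le⟩)
      (fun h => ⟨w, .inr rfl, (edist_eq_one_iff_adj.mpr h.symm).le⟩)
  rw [ediam_le_iff]
  intro a b
  obtain ⟨x, hx, hax⟩ := hnear a
  obtain ⟨y, hy, hby⟩ := hnear b
  have hxy : H.edist x y ≤ 1 := by
    rw [edist_le_one_iff_adj_or_eq]
    rcases hx with rfl | rfl <;> rcases hy with rfl | rfl <;> simp [huw, huw.symm]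
  calc H.edist a b ≤ H.edist a x + H.edist x y + H.edist y b :=
        H.edist_triangle.trans (by gcongr; exact H.edist_triangle)
    _ ≤ 1 + 1 + 1 := by rw [edist_comm (u := y)]; gcongr
    _ = 3 := by norm_num

variable [Fintype V] (G : SimpleGraph V) [DecidableRel G.Adj] {α : Type*} [NonAssocSemiring α]

theorem sum_adjMatrix_apply : ∑ v, ∑ w, G.adjMatrix α v w = 2 * #G.edgeFinset := by
  simp only [adjMatrix_apply, sum_boole, ← neighborFinset_eq_filter, card_neighborFinset_eq_degree]
  exact_mod_cast congrArg Nat.cast G.sum_degrees_eq_twice_card_edges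

theorem trace_adjMatrix_mul (M : Matrix V V α) :
    (G.adjMatrix α * M).trace = ∑ v, ∑ w ∈ G.neighborFinset v, M w v := by
  simp [Matrix.trace]

variable [DecidableEq V]

theorem sum_sum_adjMatrix_apply_eq_two_mul_card_edges (s : Finset V) :
    ∑ v ∈ s, ∑ w ∈ s, G.adjMatrix α v w = 2 * #{e ∈ G.edgeFinset | ∀ x ∈ e, x ∈ s} := by
  rw [filter_congr (q := fun e : Sym2 V => e.toFinset ⊆ s) fun e _ => by simp [subset_iff],
    card_filter_edgeFinset_toFinset_subset, ← sum_adjMatrix_apply,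
    ← (Embedding.induce (G := G) (s : Set V)).submatrix_adjMatrix (α := α)]
  simp only [Matrix.submatrix_apply]
  rw [sum_subtype s (p := (· ∈ (s : Set V))) fun _ => Iff.rfl]
  refine sum_congr rfl fun v _ => ?_
  rw [sum_subtype s (p := (· ∈ (s : Set V))) fun _ => Iff.rfl]
  rfl

theorem ediam_induce_neighborFinset_union_le {u w : V} (huw : G.Adj u w) :
    (G.induce (G.neighborFinset u ∪ G.neighborFinset w : Finset V)).ediam ≤ 3 :=
  ediam_le_three_of_adj_of_forall_adj_or_adj (u := ⟨u, by simp [huw.symm]⟩)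
    (w := ⟨w, by simp [huw]⟩) (by simpa using huw) fun v => by simpa using v.2

theorem adjMatrix_pow_three_apply_le (u w : V) :
    (G.adjMatrix ℝ ^ 3) u w ≤
      2 * #{e ∈ G.edgeFinset | ∀ x ∈ e, x ∈ G.neighborFinset u ∪ G.neighborFinset w} := by
  rw [← sum_sum_adjMatrix_apply_eq_two_mul_card_edges, pow_succ', sq, adjMatrix_mul_apply]
  simp_rw [mul_adjMatrix_apply]
  have hnonneg (x y : V) : 0 ≤ G.adjMatrix ℝ x y := by rw [adjMatrix_apply]; positivity
  refine (sum_le_sum fun x _ => ?_).trans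
    (sum_le_sum_of_subset_of_nonneg subset_union_left fun _ _ _ => sum_nonneg fun _ _ => ?_)
  · exact sum_le_sum_of_subset_of_nonneg subset_union_right fun _ _ _ => hnonneg _ _
  · exact hnonneg _ _

theorem exists_adj_le_adjMatrix_pow_three_apply (hG : G.edgeFinset.Nonempty) :
    ∃ u w, G.Adj u w ∧
      8 * (#G.edgeFinset : ℝ) ^ 3 ≤ Fintype.card V ^ 4 * (G.adjMatrix ℝ ^ 3) u w := by
  have htrace := G.isSymm_adjMatrix (α := ℝ) |>.sum_apply_pow_four_le
  rw [sum_adjMatrix_apply, pow_succ' (G.adjMatrix ℝ) 3, trace_adjMatrix_mul] at htrace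
  have hcard : #(univ.sigma fun v => G.neighborFinset v) = 2 * #G.edgeFinset := by
    simp [card_sigma, card_neighborFinset_eq_degree, sum_degrees_eq_twice_card_edges]
  obtain ⟨⟨u, w⟩, huw, hle⟩ := exists_le_of_sum_le (s := univ.sigma fun v => G.neighborFinset v)
    (f := fun _ => 8 * (#G.edgeFinset : ℝ) ^ 3)
    (g := fun p => Fintype.card V ^ 4 * (G.adjMatrix ℝ ^ 3) p.2 p.1)
    (card_pos.mp (by rw [hcard]; exact Nat.mul_pos two_pos (card_pos.mpr hG)))
    (by rw [sum_const, hcard, nsmul_eq_mul, ← mul_sum, sum_sigma]; push_cast; linarith)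
  exact ⟨w, u, (by simpa using huw : G.Adj u w).symm, hle⟩

end SimpleGraph

open SimpleGraph in
theorem stmt_2_general {V : Type*} [Fintype V] [DecidableEq V] (G : SimpleGraph V)
    [DecidableRel G.Adj] (n m : ℕ) (hn : n = Fintype.card V)
    (hm : m = G.edgeFinset.card) :
    ∃ s : Finset V,
      (m : ℝ) ^ 3 / (32 * (n : ℝ) ^ 4) ≤
        ((G.edgeFinset.filter (fun e => ∀ x ∈ e, x ∈ s)).card : ℝ) ∧
      ∀ a b : (s : Set V), (G.induce (s : Set V)).edist a b ≤ 3 := by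
  obtain hE | hE := G.edgeFinset.eq_empty_or_nonempty
  · exact ⟨∅, by simp [hm, hE], fun ⟨_, ha⟩ => by simp at ha⟩
  obtain ⟨u, w, huw, hdense⟩ := G.exists_adj_le_adjMatrix_pow_three_apply hE
  refine ⟨G.neighborFinset u ∪ G.neighborFinset w, ?_, fun a b =>
    edist_le_ediam.trans (G.ediam_induce_neighborFinset_union_le huw)⟩
  have hlocal := G.adjMatrix_pow_three_apply_le u w
  rw [← hm, ← hn] at hdense
  have hn0 : (0 : ℝ) < n := by rw [hn]; exact_mod_cast Fintype.card_pos_iff.mpr ⟨u⟩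
  have hcount := hdense.trans (mul_le_mul_of_nonneg_left hlocal (by positivity))
  calc (m : ℝ) ^ 3 / (32 * n ^ 4) = 4 * (m : ℝ) ^ 3 / n ^ 4 / 128 := by ring
    _ ≤ 4 * (m : ℝ) ^ 3 / n ^ 4 := div_le_self (by positivity) (by norm_num)
    _ ≤ _ := by rw [div_le_iff₀ (by positivity)]; linarith

/-- If a graph G has n vertices and m ≥ 12n edges, then G contains an
induced subgraph H with at least m³/(32n⁴) edges whose diameter is at most 3. -/
theorem stmt_2 {V : Type*} [Fintype V] [DecidableEq V] (G : SimpleGraph V)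
    [DecidableRel G.Adj] (n m : ℕ) (hn : n = Fintype.card V)
    (hm : m = G.edgeFinset.card) (h : 12 * n ≤ m) :
    ∃ s : Finset V,
      (m : ℝ) ^ 3 / (32 * (n : ℝ) ^ 4) ≤
        ((G.edgeFinset.filter (fun e => ∀ x ∈ e, x ∈ s)).card : ℝ) ∧
      ∀ a b : (s : Set V), (G.induce (s : Set V)).edist a b ≤ 3 :=
  stmt_2_general G n m hn hm
end

section
/- For every ε > 0, every graph G on n vertices admits an edge partition E = E₀ ∪ E₁ ∪ … ∪ E_k such that |E₀| ≤ ε n², k ≤ 50 ε⁻², and for each 1 ≤ i ≤ k the subgraph with edge set E_i has diameter at most 3. -/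
/-- The subgraph spanned by the edge set `E'` (on the vertices covered by `E'`)
has diameter at most `d`. -/
def EdgeSetDiamLE {V : Type*} (E' : Set (Sym2 V)) (d : ℕ) : Prop :=
  ∀ a b : V, a ∈ (SimpleGraph.fromEdgeSet E').support →
    b ∈ (SimpleGraph.fromEdgeSet E').support →
    (SimpleGraph.fromEdgeSet E').edist a b ≤ d

/-!
For an edge `uv`, the edges joining `N(u)` to `N(v)` (among them all edges at `u` and at `v`)
span a subgraph of diameter at most 3, since each of its vertices is adjacent to `u` or to `v`.
There are at least half as many of them as walks `u a b v`, i.e. `(A³)_{uv}` for the adjacency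
matrix `A`. Summed over the ordered edges these walk counts give `tr A⁴ = ∑_{x,y} ((A²)_{xy})²`,
which Cauchy–Schwarz (twice) bounds below by `16 m⁴ / n⁴`; so some edge yields a piece with at
least `4 m³ / n⁴` edges. Removing such pieces greedily while more than `εn²` edges remain, the
potential `n⁴ / (4 m²)` grows by at least one per piece and stays below `1 / (4ε²)`.
-/

open Finset Function Matrix

lemma div_sq_add_one_le_div_sub_sq {K m p : ℝ} (hp : 0 ≤ p) (hpm : p < m) (h : m ^ 3 ≤ K * p) :
    K / m ^ 2 + 1 ≤ K / (m - p) ^ 2 := by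
  have hm : 0 < m := hp.trans_lt hpm
  have hmp : 0 < m - p := sub_pos.2 hpm
  rw [div_add_one (by positivity), div_le_div_iff₀ (by positivity) (by positivity)]
  nlinarith [mul_le_mul_of_nonneg_right h (by linarith : 0 ≤ 2 * m - p),
    mul_nonneg (sq_nonneg m) (by nlinarith : 0 ≤ m ^ 2 + m * p - p ^ 2)]

namespace Fin

lemma pairwise_disjoint_on_cons {α : Type*} [PartialOrder α] [OrderBot α] {n : ℕ} {a : α}
    {f : Fin n → α} (ha : ∀ i, Disjoint a (f i)) (hf : Pairwise (Disjoint on f)) :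
    Pairwise (Disjoint on (Fin.cons a f : Fin (n + 1) → α)) := by
  intro i j hij
  cases i using Fin.cases <;> cases j using Fin.cases
  · exact absurd rfl hij
  · exact ha _
  · exact (ha _).symm
  · exact hf (succ_injective _ |>.ne_iff.1 hij)

lemma univ_biUnion_cons {α : Type*} [DecidableEq α] {n : ℕ} (a : Finset α) (f : Fin n → Finset α) :
    univ.biUnion (Fin.cons a f : Fin (n + 1) → Finset α) = a ∪ univ.biUnion f := by
  ext
  simp [Fin.exists_fin_succ]

end Fin

namespace Finset

variable {α : Type*} [DecidableEq α] (p : Finset α → Prop) {K t : ℝ}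

lemma exists_disjoint_family_potential_bound (hK : 0 ≤ K) (ht : 0 < t) (S : Finset α)
    (hS : ∀ H ⊆ S, H.Nonempty → ∃ P ⊆ H, p P ∧ (#H : ℝ) ^ 3 ≤ K * #P) :
    ∃ (k : ℕ) (E : Fin k → Finset α), Pairwise (Disjoint on E) ∧ (∀ i, E i ⊆ S ∧ p (E i)) ∧
      (#(S \ univ.biUnion E) : ℝ) ≤ t ∧
      (k ≠ 0 → t < #S ∧ k + K / #S ^ 2 ≤ 1 + K / t ^ 2) := by
  induction S using Finset.strongInduction with
  | H S ih =>
  rcases le_or_gt (#S : ℝ) t with hSt | hSt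
  · exact ⟨0, Fin.elim0, fun i => i.elim0, fun i => i.elim0, by simpa using hSt,
      fun h => absurd rfl h⟩
  obtain ⟨P, hPS, hpP, hP⟩ := hS S subset_rfl (card_pos.1 (by exact_mod_cast ht.trans hSt))
  have hPne : P.Nonempty := by
    rw [← card_pos, ← Nat.cast_pos (α := ℝ)]
    refine (Nat.cast_nonneg _).lt_of_ne fun h0 => ?_
    rw [← h0, mul_zero] at hP
    exact (pow_pos (ht.trans hSt) 3).not_ge hP
  obtain ⟨k, E, hE, hES, hrest, hk⟩ :=
    ih (S \ P) (sdiff_ssubset hPS hPne) fun H hH => hS H (hH.trans sdiff_subset)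
  refine ⟨k + 1, Fin.cons P E, Fin.pairwise_disjoint_on_cons
    (fun i => disjoint_sdiff.mono_right (hES i).1) hE, Fin.cases ⟨hPS, hpP⟩
    fun i => ⟨(hES i).1.trans sdiff_subset, (hES i).2⟩, ?_, fun _ => ⟨hSt, ?_⟩⟩
  · rwa [Fin.univ_biUnion_cons, sdiff_union_distrib, ← Finset.sdiff_sdiff_left']
  have hcard : (#(S \ P) : ℝ) = #S - #P := by
    rw [card_sdiff_of_subset hPS, Nat.cast_sub (card_le_card hPS)]
  push_cast
  rcases eq_or_ne k 0 with rfl | hk0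
  · have : K / #S ^ 2 ≤ K / t ^ 2 := by gcongr
    linarith
  · obtain ⟨hlt, hk⟩ := hk hk0
    rw [hcard] at hlt hk
    have := div_sq_add_one_le_div_sub_sq (Nat.cast_nonneg _) (by linarith) hP
    linarith

theorem exists_disjoint_family_card_sdiff_biUnion_le (hK : 0 ≤ K) (ht : 0 < t) (S : Finset α)
    (hS : ∀ H ⊆ S, H.Nonempty → ∃ P ⊆ H, p P ∧ (#H : ℝ) ^ 3 ≤ K * #P) :
    ∃ (k : ℕ) (E : Fin k → Finset α), (k : ℝ) ≤ K / t ^ 2 ∧ Pairwise (Disjoint on E) ∧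
      (∀ i, E i ⊆ S ∧ p (E i)) ∧ (#(S \ univ.biUnion E) : ℝ) ≤ t := by
  obtain ⟨k, E, hE, hES, hrest, hk⟩ := exists_disjoint_family_potential_bound p hK ht S hS
  refine ⟨k, E, ?_, hE, hES, hrest⟩
  rcases eq_or_ne k 0 with rfl | hk0
  · rw [Nat.cast_zero]
    positivity
  obtain ⟨hSt, hk⟩ := hk hk0
  have hSpos : (0 : ℝ) < #S := ht.trans hSt
  obtain ⟨P, hPS, -, hP⟩ := hS S subset_rfl (card_pos.1 (by exact_mod_cast hSpos))
  have hSK : (#S : ℝ) ^ 2 ≤ K := by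
    have : (#P : ℝ) ≤ #S := by exact_mod_cast card_le_card hPS
    nlinarith
  have : 1 ≤ K / #S ^ 2 := (one_le_div (by positivity)).2 hSK
  linarith

end Finset

namespace SimpleGraph

lemma edist_le_three_of_adj {V : Type*} {G : SimpleGraph V} {u v x y : V} (huv : G.Adj u v)
    (hx : G.Adj x u ∨ G.Adj x v) (hy : G.Adj u y ∨ G.Adj v y) : G.edist x y ≤ 3 := by
  rcases hx with hx | hx <;> rcases hy with hy | hy
  · exact (edist_le (.cons hx (.cons hy .nil))).trans (by norm_num)
  · exact (edist_le (.cons hx (.cons huv (.cons hy .nil)))).trans (by norm_num)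
  · exact (edist_le (.cons hx (.cons huv.symm (.cons hy .nil)))).trans (by norm_num)
  · exact (edist_le (.cons hx (.cons hy .nil))).trans (by norm_num)

variable {V : Type*} [Fintype V] [DecidableEq V] (G : SimpleGraph V) [DecidableRel G.Adj]

def crossPairs (u v : V) : Finset (V × V) :=
  {p ∈ G.neighborFinset u ×ˢ G.neighborFinset v | G.Adj p.1 p.2}

def crossEdges (u v : V) : Finset (Sym2 V) :=
  (G.crossPairs u v).image fun p => s(p.1, p.2)

lemma adjMatrix_pow_three_apply (u v : V) : (G.adjMatrix ℝ ^ 3) u v = #(G.crossPairs u v) := by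
  rw [crossPairs, card_filter, sum_product, pow_three, adjMatrix_mul_apply]
  push_cast
  refine sum_congr rfl fun a _ => ?_
  simp [adjMatrix_apply]

lemma sum_adjMatrix_sq_apply : ∑ x, ∑ y, (G.adjMatrix ℝ ^ 2) x y = ∑ z, (G.degree z : ℝ) ^ 2 := by
  have hrow : ∀ z, ∑ y, G.adjMatrix ℝ z y = G.degree z := by
    simp [adjMatrix_apply, sum_boole, ← card_neighborFinset_eq_degree, neighborFinset_eq_filter]
  calc ∑ x, ∑ y, (G.adjMatrix ℝ ^ 2) x y
      = ∑ z, (∑ x, G.adjMatrix ℝ x z) * ∑ y, G.adjMatrix ℝ z y := by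
        simp only [sq, mul_apply, sum_mul_sum]
        conv_rhs => rw [sum_comm]
        exact sum_congr rfl fun x _ => sum_comm
    _ = ∑ z, (G.degree z : ℝ) ^ 2 := by
        simp only [← (G.isSymm_adjMatrix).apply _ (_ : V), hrow, sq]

lemma sum_adjMatrix_sq_apply_sq : ∑ x, ∑ y, ((G.adjMatrix ℝ ^ 2) x y) ^ 2 =
    ∑ u, ∑ v ∈ G.neighborFinset u, (G.adjMatrix ℝ ^ 3) u v := by
  have hsymm : (G.adjMatrix ℝ ^ 2).IsSymm := (G.isSymm_adjMatrix).pow 2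
  calc ∑ x, ∑ y, ((G.adjMatrix ℝ ^ 2) x y) ^ 2
      = trace (G.adjMatrix ℝ ^ 2 * G.adjMatrix ℝ ^ 2) := by
        simp only [trace, Matrix.diag, mul_apply, sq ((G.adjMatrix ℝ ^ 2) _ _)]
        refine sum_congr rfl fun x _ => sum_congr rfl fun y _ => ?_
        rw [hsymm.apply y x]
    _ = trace (G.adjMatrix ℝ ^ 3 * G.adjMatrix ℝ) := by rw [← pow_add, ← pow_succ]
    _ = _ := by simp [trace]

variable {G}

lemma mem_crossEdges {u v : V} {e : Sym2 V} :
    e ∈ G.crossEdges u v ↔ ∃ a b, G.Adj u a ∧ G.Adj v b ∧ G.Adj a b ∧ s(a, b) = e := by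
  simp [crossEdges, crossPairs, and_assoc]

lemma crossEdges_subset_edgeFinset (u v : V) : G.crossEdges u v ⊆ G.edgeFinset := by
  intro e he
  obtain ⟨a, b, -, -, hab, rfl⟩ := mem_crossEdges.1 he
  simpa using hab

lemma card_crossPairs_le (u v : V) : #(G.crossPairs u v) ≤ 2 * #(G.crossEdges u v) := by
  refine card_le_mul_card_image _ 2 fun e _ => ?_
  induction e with
  | _ a b =>
    calc #{p ∈ G.crossPairs u v | s(p.1, p.2) = s(a, b)}
        ≤ #({(a, b), (b, a)} : Finset (V × V)) := card_le_card fun p hp => by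
          obtain ⟨x, y⟩ := p
          simp only [mem_filter, Sym2.eq_iff] at hp
          rcases hp.2 with ⟨rfl, rfl⟩ | ⟨rfl, rfl⟩ <;> simp
      _ ≤ 2 := card_le_two

theorem edgeSetDiamLE_crossEdges {u v : V} (huv : G.Adj u v) :
    EdgeSetDiamLE (G.crossEdges u v : Set (Sym2 V)) 3 := by
  set L := fromEdgeSet (G.crossEdges u v : Set (Sym2 V))
  have hL {a b : V} (ha : G.Adj u a) (hb : G.Adj v b) (hab : G.Adj a b) : L.Adj a b :=
    (fromEdgeSet_adj _).2 ⟨mem_crossEdges.2 ⟨a, b, ha, hb, hab, rfl⟩, hab.ne⟩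
  have hnear : ∀ x ∈ L.support, L.Adj x u ∨ L.Adj x v := by
    rintro x ⟨y, hxy⟩
    obtain ⟨hxy, -⟩ := (fromEdgeSet_adj _).1 hxy
    obtain ⟨a, b, ha, hb, -, hab⟩ := mem_crossEdges.1 hxy
    rcases Sym2.eq_iff.1 hab with ⟨rfl, -⟩ | ⟨-, rfl⟩
    · exact .inl (hL ha huv.symm ha.symm)
    · exact .inr (hL huv hb hb).symm
  intro x y hx hy
  exact edist_le_three_of_adj (hL huv huv.symm huv.symm).symm (hnear x hx)
    ((hnear y hy).imp (·.symm) (·.symm))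

theorem exists_adj_four_mul_card_edgeFinset_pow_three_le (hG : G.edgeFinset.Nonempty) :
    ∃ u v, G.Adj u v ∧
      4 * (#G.edgeFinset : ℝ) ^ 3 ≤ #(G.crossEdges u v) * (Fintype.card V : ℝ) ^ 4 := by
  set A := G.adjMatrix ℝ
  set n : ℝ := (Fintype.card V : ℝ)
  set m : ℝ := (#G.edgeFinset : ℝ)
  have : Nonempty G.Dart := by
    obtain ⟨e, he⟩ := hG
    induction e with | _ a b => exact ⟨⟨(a, b), by simpa using he⟩⟩
  obtain ⟨d, hd⟩ := Finite.exists_max fun d : G.Dart => (A ^ 3) d.fst d.snd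
  refine ⟨d.fst, d.snd, d.adj, ?_⟩
  set L : ℝ := (#(G.crossEdges d.fst d.snd) : ℝ)
  set D := ∑ z, (G.degree z : ℝ) ^ 2
  set W := ∑ x, ∑ y, ((A ^ 2) x y) ^ 2
  have hm : 0 < m := by simpa [m] using hG.card_pos
  have hdeg : ∑ z, (G.degree z : ℝ) = 2 * m := by
    simp only [m]; exact_mod_cast G.sum_degrees_eq_twice_card_edges
  have hD : (2 * m) ^ 2 ≤ n * D := by
    simpa [hdeg] using sq_sum_le_card_mul_sum_sq (s := univ) (f := fun z => (G.degree z : ℝ))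
  have hW : D ^ 2 ≤ n ^ 2 * W := by
    simp only [D, W, ← G.sum_adjMatrix_sq_apply]
    simpa [Fintype.sum_prod_type, sq n] using
      sq_sum_le_card_mul_sum_sq (s := univ) (f := fun p : V × V => (A ^ 2) p.1 p.2)
  have hWM : W ≤ 2 * m * (2 * L) := by
    calc W = ∑ u, ∑ v ∈ G.neighborFinset u, (A ^ 3) u v := G.sum_adjMatrix_sq_apply_sq
      _ ≤ ∑ u, ∑ v ∈ G.neighborFinset u, (A ^ 3) d.fst d.snd :=
        sum_le_sum fun u _ => sum_le_sum fun v hv => hd ⟨(u, v), by simpa using hv⟩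
      _ = 2 * m * (A ^ 3) d.fst d.snd := by simp [← sum_mul, hdeg]
      _ ≤ 2 * m * (2 * L) := by
        rw [G.adjMatrix_pow_three_apply]
        gcongr
        simp only [L]; exact_mod_cast card_crossPairs_le _ _
  have key : 4 * m * (4 * m ^ 3) ≤ 4 * m * (L * n ^ 4) :=
    calc 4 * m * (4 * m ^ 3) = ((2 * m) ^ 2) ^ 2 := by ring
      _ ≤ (n * D) ^ 2 := by gcongr
      _ ≤ n ^ 2 * (n ^ 2 * W) := by rw [mul_pow]; gcongr
      _ ≤ n ^ 2 * (n ^ 2 * (2 * m * (2 * L))) := by gcongr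
      _ = 4 * m * (L * n ^ 4) := by ring
  exact le_of_mul_le_mul_left key (by positivity)

theorem exists_subset_edgeSetDiamLE_three {H : Finset (Sym2 V)} (hH : H ⊆ G.edgeFinset)
    (hne : H.Nonempty) : ∃ P ⊆ H, EdgeSetDiamLE (P : Set (Sym2 V)) 3 ∧
      (#H : ℝ) ^ 3 ≤ (Fintype.card V : ℝ) ^ 4 / 4 * #P := by
  classical
  set G' := fromEdgeSet (H : Set (Sym2 V))
  -- `G'.edgeSet` has several `Fintype` instances, so this is stated for all of them.
  have hG' : ∀ _ : Fintype G'.edgeSet, G'.edgeFinset = H := by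
    intro _
    ext e
    simp only [G', mem_edgeFinset, edgeSet_fromEdgeSet, Set.mem_sdiff, mem_coe,
      Sym2.mem_diagSet, and_iff_left_iff_imp]
    exact fun he => G.not_isDiag_of_mem_edgeSet (mem_edgeFinset.1 (hH he))
  obtain ⟨u, v, huv, hcard⟩ := exists_adj_four_mul_card_edgeFinset_pow_three_le (G := G')
    (by rwa [hG' _])
  rw [hG' _] at hcard
  refine ⟨G'.crossEdges u v, ?_, edgeSetDiamLE_crossEdges huv, by linarith⟩
  have := crossEdges_subset_edgeFinset (G := G') u v
  rwa [hG' _] at this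

variable (G) in
theorem exists_disjoint_family_edgeSetDiamLE_three {ε : ℝ} (hε : 0 < ε) :
    ∃ (k : ℕ) (E : Fin k → Finset (Sym2 V)), (k : ℝ) ≤ (4 * ε ^ 2)⁻¹ ∧
      Pairwise (Disjoint on E) ∧
      (∀ i, E i ⊆ G.edgeFinset ∧ EdgeSetDiamLE (E i : Set (Sym2 V)) 3) ∧
      (#(G.edgeFinset \ univ.biUnion E) : ℝ) ≤ ε * (Fintype.card V : ℝ) ^ 2 := by
  rcases (Fintype.card V).eq_zero_or_pos with hV | hV
  · refine ⟨0, Fin.elim0, by rw [Nat.cast_zero]; positivity, fun i => i.elim0, fun i => i.elim0, ?_⟩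
    have := G.card_edgeFinset_le_card_choose_two
    simp_all
  obtain ⟨k, E, hk, hE⟩ := exists_disjoint_family_card_sdiff_biUnion_le
    (fun P : Finset (Sym2 V) => EdgeSetDiamLE (P : Set (Sym2 V)) 3)
    (K := (Fintype.card V : ℝ) ^ 4 / 4) (t := ε * (Fintype.card V : ℝ) ^ 2) (by positivity)
    (by positivity) G.edgeFinset
    fun H hH hne => exists_subset_edgeSetDiamLE_three hH hne
  refine ⟨k, E, hk.trans_eq ?_, hE⟩
  field_simp

end SimpleGraph

/-- Every graph G on n vertices admits an edge partition
E = E₀ ∪ E₁ ∪ … ∪ E_k with |E₀| ≤ εn², k ≤ 50ε⁻², and each E_i (i ≥ 1) of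
diameter at most 3. -/
theorem stmt_4 {V : Type*} [Fintype V] [DecidableEq V] (G : SimpleGraph V)
    [DecidableRel G.Adj] (ε : ℝ) (hε : 0 < ε) (n : ℕ) (hn : n = Fintype.card V) :
    ∃ (k : ℕ) (E : Fin (k + 1) → Finset (Sym2 V)),
      (k : ℝ) ≤ 50 * ε⁻¹ ^ 2 ∧
      (∀ i j, i ≠ j → Disjoint (E i) (E j)) ∧
      Finset.univ.biUnion E = G.edgeFinset ∧
      ((E 0).card : ℝ) ≤ ε * (n : ℝ) ^ 2 ∧
      ∀ i, i ≠ 0 → EdgeSetDiamLE (↑(E i) : Set (Sym2 V)) 3 := by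
  subst hn
  obtain ⟨k, F, hk, hF, hFG, hrest⟩ := G.exists_disjoint_family_edgeSetDiamLE_three hε
  have hsub : univ.biUnion F ⊆ G.edgeFinset := biUnion_subset.2 fun i _ => (hFG i).1
  refine ⟨k, Fin.cons (G.edgeFinset \ univ.biUnion F) F, hk.trans ?_, fun i j hij =>
    Fin.pairwise_disjoint_on_cons (fun i => sdiff_disjoint.mono_right
      (subset_biUnion_of_mem F (mem_univ i))) hF hij, ?_, hrest,
    Fin.cases (fun h => absurd rfl h) fun i _ => (hFG i).2⟩
  · rw [inv_pow, mul_inv]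
    have : 0 ≤ (ε ^ 2)⁻¹ := by positivity
    linarith
  · rw [Fin.univ_biUnion_cons, sdiff_union_of_subset hsub]
end

section
/- If every subgraph of a graph G with diameter at most d has at most m edges, then every subgraph of the r-fold blow-up G(r) with diameter at most d has at most r²m edges. -/
/-!
Project a subgraph `H` of the blow-up `G(r)` to `V`. Since `H` has no edge inside a class
`Vᵢ`, the projection is a graph homomorphism onto a subgraph of `G`; homomorphisms do not
increase distances, so the projection still has diameter at most `d`, hence at most `m` edges.
Each of its edges `vᵢvⱼ` lifts to at most `r²` edges of `H`, one for each pair of copies.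
-/

/-- The graph `H` has diameter at most `d` (distances measured within `H`, among
the vertices of `H`, i.e. those in its support). -/
def GraphDiamLE {V : Type*} (H : SimpleGraph V) (d : ℕ) : Prop :=
  ∀ a b : V, a ∈ H.support → b ∈ H.support → H.edist a b ≤ d

open Set

theorem Set.ncard_le_mul_ncard_image {α β : Type*} {f : α → β} {s : Set α} {n : ℕ}
    (hn : ∀ b ∈ f '' s, {a ∈ s | f a = b}.ncard ≤ n) : s.ncard ≤ n * (f '' s).ncard := by
  classical
  by_cases hs : s.Finite
  · lift s to Finset α using hs
    rw [← Finset.coe_image, ncard_coe_finset, ncard_coe_finset]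
    refine Finset.card_le_mul_card_image s n fun b hb => ?_
    rw [← ncard_coe_finset, Finset.coe_filter]
    exact hn b (by simpa using hb)
  · simp [Set.Infinite.ncard hs]

theorem Sym2.ncard_le_of_map_fst_eq {V ι : Type*} [Finite ι] {s : Set (Sym2 (V × ι))}
    {b : Sym2 V} (hs : ∀ e ∈ s, e.map Prod.fst = b) : s.ncard ≤ Nat.card ι ^ 2 := by
  induction b using Sym2.ind with
  | _ u w =>
  have hsub : s ⊆ range fun ij : ι × ι => s((u, ij.1), (w, ij.2)) := by
    intro e he
    induction e using Sym2.ind with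
    | _ a b =>
    rcases Sym2.eq_iff.mp (hs _ he) with ⟨rfl, rfl⟩ | ⟨rfl, rfl⟩
    · exact ⟨(a.2, b.2), rfl⟩
    · exact ⟨(b.2, a.2), Sym2.eq_swap⟩
  calc s.ncard ≤ (range fun ij : ι × ι => s((u, ij.1), (w, ij.2))).ncard :=
        ncard_le_ncard hsub (finite_range _)
    _ ≤ Nat.card (ι × ι) := by rw [← Nat.card_coe_set_eq]; exact Finite.card_range_le _
    _ = Nat.card ι ^ 2 := by rw [Nat.card_prod, sq]

theorem Sym2.ncard_le_card_sq_mul_ncard_image_map_fst {V ι : Type*} [Finite ι]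
    (s : Set (Sym2 (V × ι))) : s.ncard ≤ Nat.card ι ^ 2 * (Sym2.map Prod.fst '' s).ncard :=
  ncard_le_mul_ncard_image fun _ _ => Sym2.ncard_le_of_map_fst_eq fun _ he => he.2

namespace SimpleGraph

variable {V W : Type*}

theorem edgeSet_map_of_adj_ne {G : SimpleGraph V} {f : V → W}
    (hf : ∀ {u v}, G.Adj u v → f u ≠ f v) : (G.map f).edgeSet = Sym2.map f '' G.edgeSet := by
  ext e
  induction e using Sym2.ind with
  | _ x y =>
  constructor
  · rintro ⟨-, u, v, huv, rfl, rfl⟩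
    exact ⟨s(u, v), huv, rfl⟩
  · rintro ⟨e, he, hfe⟩
    induction e using Sym2.ind with
    | _ u v =>
    rw [← hfe]
    exact (Hom.map f G hf).map_mem_edgeSet he

theorem map_le_of_le_comap {G : SimpleGraph V} {G' : SimpleGraph W} {f : V → W}
    (h : G ≤ G'.comap f) : G.map f ≤ G' := by
  rintro _ _ ⟨-, u, v, huv, rfl, rfl⟩
  exact h huv

theorem support_map_subset (f : V → W) (G : SimpleGraph V) :
    (G.map f).support ⊆ f '' G.support := by
  rintro _ ⟨_, -, u, v, huv, rfl, rfl⟩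
  exact ⟨u, ⟨v, huv⟩, rfl⟩

theorem Hom.edist_le {G : SimpleGraph V} {G' : SimpleGraph W} (f : G →g G') (u v : V) :
    G'.edist (f u) (f v) ≤ G.edist u v :=
  le_sInf <| forall_mem_range.2 fun p => Walk.length_map f p ▸ SimpleGraph.edist_le (p.map f)

end SimpleGraph

open SimpleGraph in
theorem GraphDiamLE.map {V W : Type*} {G : SimpleGraph V} {f : V → W} {d : ℕ}
    (hf : ∀ {u v}, G.Adj u v → f u ≠ f v) (h : GraphDiamLE G d) :
    GraphDiamLE (G.map f) d := by
  intro a b ha hb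
  obtain ⟨u, hu, rfl⟩ := support_map_subset f G ha
  obtain ⟨v, hv, rfl⟩ := support_map_subset f G hb
  exact ((Hom.map f G hf).edist_le u v).trans (h u v hu hv)

theorem stmt_5_general {V : Type*} (G : SimpleGraph V) (r m d : ℕ)
    (h : ∀ H : SimpleGraph V, H ≤ G → GraphDiamLE H d → H.edgeSet.ncard ≤ m) :
    ∀ H : SimpleGraph (V × Fin r), H ≤ SimpleGraph.comap Prod.fst G →
      GraphDiamLE H d → H.edgeSet.ncard ≤ r ^ 2 * m := by
  intro H hle hdiam
  have hfst : ∀ {a b : V × Fin r}, H.Adj a b → a.1 ≠ b.1 := fun hab => G.ne_of_adj (hle hab)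
  calc H.edgeSet.ncard ≤ Nat.card (Fin r) ^ 2 * (Sym2.map Prod.fst '' H.edgeSet).ncard :=
        Sym2.ncard_le_card_sq_mul_ncard_image_map_fst _
    _ = r ^ 2 * (H.map Prod.fst).edgeSet.ncard := by
        rw [Nat.card_fin, SimpleGraph.edgeSet_map_of_adj_ne hfst]
    _ ≤ r ^ 2 * m := Nat.mul_le_mul_left _
        (h _ (SimpleGraph.map_le_of_le_comap hle) (hdiam.map hfst))

/-- If every subgraph of G with diameter at most d has at most m edges,
then every subgraph of the r-fold blow-up G(r) with diameter at most d has at most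
r²m edges.  The blow-up is realized on vertex set V × Fin r via `comap Prod.fst`. -/
theorem stmt_5 {V : Type*} [Fintype V] (G : SimpleGraph V) (r m d : ℕ)
    (h : ∀ H : SimpleGraph V, H ≤ G → GraphDiamLE H d → H.edgeSet.ncard ≤ m) :
    ∀ H : SimpleGraph (V × Fin r), H ≤ SimpleGraph.comap Prod.fst G →
      GraphDiamLE H d → H.edgeSet.ncard ≤ r ^ 2 * m :=
  stmt_5_general G r m d h
end

section
/- P(n, 1/4, 2) = 1: for every graph G on n vertices there is an edge partition E = E₀ ∪ E₁ such that |E₀| < n²/4 and the subgraph with edge set E₁ has diameter at most 2 (or E₁ is empty). -/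
/-!
Let `v` be a vertex of maximum degree `Δ` and `N = N[v]` its closed neighbourhood. Keep as `E₁`
the edges with both ends in `N`: every vertex they cover is `v` or a neighbour of `v` within
`E₁`, so `E₁` has diameter at most `2`. Every other edge has an end among the `n - Δ - 1`
vertices outside `N`, each of degree at most `Δ`, so `|E₀| ≤ (n - Δ - 1) Δ < n² / 4`.
-/

open SimpleGraph Finset

namespace SimpleGraph

variable {V : Type*}

lemma edist_le_two_of_eq_or_adj {H : SimpleGraph V} {v a b : V}
    (ha : a = v ∨ H.Adj a v) (hb : b = v ∨ H.Adj b v) : H.edist a b ≤ 2 := by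
  have edist_le_one : ∀ c, c = v ∨ H.Adj c v → H.edist c v ≤ 1 := by
    rintro c (rfl | hc)
    · simp
    · exact (edist_eq_one_iff_adj.2 hc).le
  calc H.edist a b ≤ H.edist a v + H.edist v b := H.edist_triangle
    _ ≤ 1 + 1 := add_le_add (edist_le_one a ha) (H.edist_comm ▸ edist_le_one b hb)
    _ = 2 := by norm_num

variable [Fintype V] [DecidableEq V] (G : SimpleGraph V) [DecidableRel G.Adj]

def closedNeighborFinset (v : V) : Finset V := insert v (G.neighborFinset v)

lemma card_closedNeighborFinset (v : V) : #(G.closedNeighborFinset v) = G.degree v + 1 := by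
  rw [closedNeighborFinset, card_insert_of_notMem (by simp), card_neighborFinset_eq_degree]

lemma eq_or_adj_of_mem_support_closedNeighborFinset {v c : V}
    (hc : c ∈ (fromEdgeSet ↑(G.edgeFinset ∩ (G.closedNeighborFinset v).sym2)).support) :
    c = v ∨ (fromEdgeSet ↑(G.edgeFinset ∩ (G.closedNeighborFinset v).sym2)).Adj c v := by
  obtain ⟨d, hcd⟩ := hc
  simp only [fromEdgeSet_adj, coe_inter, Set.mem_inter_iff, mem_coe, mem_sym2_iff,
    mem_edgeFinset] at hcd
  have hcN := hcd.1.2 c (Sym2.mem_mk_left c d)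
  rw [closedNeighborFinset, mem_insert, mem_neighborFinset] at hcN
  refine hcN.imp id fun hvc => ?_
  simp only [fromEdgeSet_adj, coe_inter, Set.mem_inter_iff, mem_coe, mem_sym2_iff,
    mem_edgeFinset, mem_edgeSet, Sym2.forall_mem_pair, closedNeighborFinset, mem_insert,
    mem_neighborFinset]
  exact ⟨⟨hvc.symm, by simp [hvc]⟩, hvc.ne'⟩

lemma card_edgeFinset_sdiff_sym2_le (s : Finset V) :
    #(G.edgeFinset \ s.sym2) ≤ #sᶜ * G.maxDegree := by
  have hcover : G.edgeFinset \ s.sym2 ⊆ sᶜ.biUnion (G.incidenceFinset ·) := by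
    intro e he
    obtain ⟨heG, hes⟩ := mem_sdiff.1 he
    obtain ⟨x, hxe, hxs⟩ : ∃ x ∈ e, x ∉ s := by simpa [mem_sym2_iff] using hes
    exact mem_biUnion.2
      ⟨x, mem_compl.2 hxs, (G.mem_incidenceFinset x e).2 ⟨mem_edgeFinset.1 heG, hxe⟩⟩
  refine (card_le_card hcover).trans (card_biUnion_le_card_mul _ _ _ fun u _ => ?_)
  rw [card_incidenceFinset_eq_degree]
  exact G.degree_le_maxDegree u

end SimpleGraph

lemma four_mul_sub_mul_lt_sq {n d : ℕ} (hn : 0 < n) : 4 * ((n - (d + 1)) * d) < n ^ 2 := by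
  rcases le_or_gt n (d + 1) with h | h
  · simp [Nat.sub_eq_zero_of_le h, hn]
  · obtain ⟨m, rfl⟩ := Nat.exists_eq_add_of_le h.le
    rw [show d + 1 + m - (d + 1) = m by omega]
    nlinarith [sq_nonneg ((m : ℤ) - d)]

/-- P(n,1/4,2) = 1: every graph G on n ≥ 1 vertices admits an edge
partition E = E₀ ∪ E₁ with |E₀| < n²/4 and E₁ of diameter at most 2 (this holds
vacuously if E₁ is empty). -/
theorem stmt_9 {V : Type*} [Fintype V] [DecidableEq V] (G : SimpleGraph V)
    [DecidableRel G.Adj] (n : ℕ) (hn : n = Fintype.card V) (hpos : 0 < n) :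
    ∃ E₀ E₁ : Finset (Sym2 V), Disjoint E₀ E₁ ∧ E₀ ∪ E₁ = G.edgeFinset ∧
      (E₀.card : ℝ) < (n : ℝ) ^ 2 / 4 ∧ EdgeSetDiamLE (↑E₁ : Set (Sym2 V)) 2 := by
  have : Nonempty V := Fintype.card_pos_iff.1 (hn ▸ hpos)
  obtain ⟨v, hv⟩ := G.exists_maximal_degree_vertex
  set N := G.closedNeighborFinset v
  refine ⟨G.edgeFinset \ N.sym2, G.edgeFinset ∩ N.sym2, disjoint_sdiff_inter _ _,
    sdiff_union_inter _ _, ?_, fun a b ha hb => edist_le_two_of_eq_or_adj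
      (G.eq_or_adj_of_mem_support_closedNeighborFinset ha)
      (G.eq_or_adj_of_mem_support_closedNeighborFinset hb)⟩
  have hN : #N = G.maxDegree + 1 := by rw [card_closedNeighborFinset, hv]
  have hE₀ : #(G.edgeFinset \ N.sym2) ≤ (n - (G.maxDegree + 1)) * G.maxDegree := by
    simpa [card_compl, hN, hn] using G.card_edgeFinset_sdiff_sym2_le N
  have : 4 * #(G.edgeFinset \ N.sym2) < n ^ 2 :=
    (Nat.mul_le_mul_left 4 hE₀).trans_lt (four_mul_sub_mul_lt_sq hpos)
  rw [lt_div_iff₀ (by norm_num), mul_comm]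
  exact_mod_cast this
end

section
/- If a graph G has n vertices and m ≥ 4n edges, then G has a subgraph with diameter at most 4 and at least m²/(8n²) edges. -/
/-!
Instead of the whole ball `G₂(v)` take only the edges of `G` at a neighbour of `v`. Every vertex of
this subgraph reaches `v` within it in at most two steps, so its diameter is at most `4`; and it
contains all `deg x` edges at each neighbour `x` of `v`, so it has at least `½ ∑_{x ∼ v} deg x`
edges. Summing over `v` gives `½ ∑_x deg² x ≥ 2m²/n` by Cauchy–Schwarz, hence some `v` yields
at least `2m²/n²` edges.
-/

open Finset

namespace SimpleGraph

variable {V : Type*} (G : SimpleGraph V) (v : V)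

def neighborEdgeGraph : SimpleGraph V where
  Adj x y := G.Adj x y ∧ (G.Adj v x ∨ G.Adj v y)
  symm := ⟨fun _ _ h => ⟨h.1.symm, h.2.symm⟩⟩
  loopless := ⟨fun _ h => G.irrefl h.1⟩

@[simp]
lemma neighborEdgeGraph_adj {x y : V} :
    (G.neighborEdgeGraph v).Adj x y ↔ G.Adj x y ∧ (G.Adj v x ∨ G.Adj v y) :=
  Iff.rfl

lemma neighborEdgeGraph_le : G.neighborEdgeGraph v ≤ G := fun _ _ h => h.1

lemma edist_neighborEdgeGraph_le_two {x : V} (hx : x ∈ (G.neighborEdgeGraph v).support) :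
    (G.neighborEdgeGraph v).edist x v ≤ 2 := by
  obtain ⟨y, hxy, hvx | hvy⟩ := hx
  · have hxv : (G.neighborEdgeGraph v).Adj x v := ⟨hvx.symm, .inl hvx⟩
    exact (edist_le (.cons hxv .nil)).trans (by norm_num)
  · have hxy' : (G.neighborEdgeGraph v).Adj x y := ⟨hxy, .inr hvy⟩
    have hyv : (G.neighborEdgeGraph v).Adj y v := ⟨hvy.symm, .inl hvy⟩
    exact edist_le (.cons hxy' (.cons hyv .nil))

lemma graphDiamLE_neighborEdgeGraph : GraphDiamLE (G.neighborEdgeGraph v) 4 := by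
  intro a b ha hb
  calc (G.neighborEdgeGraph v).edist a b
      ≤ (G.neighborEdgeGraph v).edist a v + (G.neighborEdgeGraph v).edist v b :=
        SimpleGraph.edist_triangle
    _ ≤ 2 + 2 := add_le_add (G.edist_neighborEdgeGraph_le_two v ha)
        (by rw [SimpleGraph.edist_comm]; exact G.edist_neighborEdgeGraph_le_two v hb)
    _ = 4 := by norm_num

variable [Fintype V] [DecidableRel G.Adj]

lemma sum_degree_neighborFinset_le :
    ∑ x ∈ G.neighborFinset v, G.degree x ≤ 2 * (G.neighborEdgeGraph v).edgeSet.ncard := by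
  classical
  set H := G.neighborEdgeGraph v
  have hdeg : ∀ x ∈ G.neighborFinset v, G.degree x = H.degree x := by
    intro x hx
    rw [mem_neighborFinset] at hx
    simp_rw [← card_neighborFinset_eq_degree]
    congr 1
    ext y
    simp [H, hx]
  calc ∑ x ∈ G.neighborFinset v, G.degree x = ∑ x ∈ G.neighborFinset v, H.degree x :=
        sum_congr rfl hdeg
    _ ≤ ∑ x, H.degree x := sum_le_sum_of_subset (subset_univ _)
    _ = 2 * H.edgeSet.ncard := by
        rw [sum_degrees_eq_twice_card_edges, Set.ncard_eq_toFinset_card']; rfl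

lemma sum_sum_degree_neighborFinset :
    ∑ v, ∑ x ∈ G.neighborFinset v, G.degree x = ∑ x, G.degree x ^ 2 := by
  rw [sum_comm' (t' := univ) (s' := fun x => G.neighborFinset x) (by simp [adj_comm])]
  simp [sq]

theorem exists_two_mul_sq_le_ncard_neighborEdgeGraph [Nonempty V] :
    ∃ v, 2 * G.edgeSet.ncard ^ 2 ≤
      Fintype.card V ^ 2 * (G.neighborEdgeGraph v).edgeSet.ncard := by
  set n := Fintype.card V
  set m := G.edgeSet.ncard
  set f := fun v => (G.neighborEdgeGraph v).edgeSet.ncard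
  have cauchySchwarz : (2 * m) ^ 2 ≤ n * ∑ x, G.degree x ^ 2 := by
    rw [show m = #G.edgeFinset from Set.ncard_eq_toFinset_card' _,
      ← sum_degrees_eq_twice_card_edges]
    exact sq_sum_le_card_mul_sum_sq
  have hsum : ∑ x, G.degree x ^ 2 ≤ 2 * ∑ v, f v := by
    rw [← sum_sum_degree_neighborFinset, mul_sum]
    exact sum_le_sum fun v _ => G.sum_degree_neighborFinset_le v
  have hmean : 2 * (2 * m ^ 2) ≤ 2 * (n * ∑ v, f v) :=
    calc 2 * (2 * m ^ 2) = (2 * m) ^ 2 := by ring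
      _ ≤ n * ∑ x, G.degree x ^ 2 := cauchySchwarz
      _ ≤ n * (2 * ∑ v, f v) := Nat.mul_le_mul_left n hsum
      _ = 2 * (n * ∑ v, f v) := by ring
  obtain ⟨v, -, hv⟩ := exists_le_of_sum_le (s := univ) univ_nonempty
    (f := fun _ => 2 * m ^ 2) (g := fun v => n ^ 2 * f v) (by
      simp only [sum_const, card_univ, smul_eq_mul, ← mul_sum]
      calc n * (2 * m ^ 2) ≤ n * (n * ∑ v, f v) := Nat.mul_le_mul_left n (by omega)
        _ = n ^ 2 * ∑ v, f v := by ring)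
  exact ⟨v, hv⟩

end SimpleGraph

theorem stmt_10_general {V : Type*} [Fintype V] (G : SimpleGraph V) (n m : ℕ)
    (hn : n = Fintype.card V) (hm : m = G.edgeSet.ncard) :
    ∃ H : SimpleGraph V, H ≤ G ∧ GraphDiamLE H 4 ∧
      (m : ℝ) ^ 2 / (8 * (n : ℝ) ^ 2) ≤ (H.edgeSet.ncard : ℝ) := by
  classical
  rcases isEmpty_or_nonempty V with _ | _
  · exact ⟨G, le_rfl, fun a => isEmptyElim a, by simp [hn]⟩
  obtain ⟨v, hv⟩ := G.exists_two_mul_sq_le_ncard_neighborEdgeGraph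
  refine ⟨G.neighborEdgeGraph v, G.neighborEdgeGraph_le v,
    G.graphDiamLE_neighborEdgeGraph v, ?_⟩
  subst hn hm
  have hv' : 2 * (G.edgeSet.ncard : ℝ) ^ 2 ≤
      (Fintype.card V : ℝ) ^ 2 * (G.neighborEdgeGraph v).edgeSet.ncard := by
    exact_mod_cast hv
  rw [div_le_iff₀ (by positivity)]
  linarith [sq_nonneg (G.edgeSet.ncard : ℝ),
    mul_nonneg (sq_nonneg (Fintype.card V : ℝ))
      (G.neighborEdgeGraph v).edgeSet.ncard.cast_nonneg]

/-- If a graph G has n vertices and m ≥ 4n edges, then G has a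
subgraph with diameter at most 4 and at least m²/(8n²) edges. -/
theorem stmt_10 {V : Type*} [Fintype V] (G : SimpleGraph V) (n m : ℕ)
    (hn : n = Fintype.card V) (hm : m = G.edgeSet.ncard) (h : 4 * n ≤ m) :
    ∃ H : SimpleGraph V, H ≤ G ∧ GraphDiamLE H 4 ∧
      (m : ℝ) ^ 2 / (8 * (n : ℝ) ^ 2) ≤ (H.edgeSet.ncard : ℝ) :=
  stmt_10_general G n m hn hm
end

section
/- Let t be a positive integer dividing n with t ≤ n/2, and let G be the disjoint union of t cliques each on n/t vertices. If E = E₀ ∪ E₁ ∪ … ∪ E_ℓ is a partition of the edges of G such that |E₀| ≤ (t/2)·C(n/t, 2) and each E_i (1 ≤ i ≤ ℓ) spans a connected subgraph, then ℓ ≥ t/2. -/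
/-- Let G be a disjoint union of t cliques each on s = n/t vertices
(with t ≤ n/2, i.e. s ≥ 2). If E = E₀ ∪ E₁ ∪ … ∪ E_ℓ is an edge partition with
|E₀| ≤ (t/2)·C(s,2) and each E_i (i ≥ 1) spanning a connected subgraph, then
ℓ ≥ t/2. -/
theorem stmt_12 (t s : ℕ) (ht : 0 < t) (hts : 2 * t ≤ t * s)
    (G : SimpleGraph (Fin t × Fin s)) [DecidableRel G.Adj]
    (hG : ∀ a b : Fin t × Fin s, G.Adj a b ↔ a.1 = b.1 ∧ a ≠ b)
    (l : ℕ) (E : Fin (l + 1) → Finset (Sym2 (Fin t × Fin s)))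
    (hdisj : ∀ i j, i ≠ j → Disjoint (E i) (E j))
    (hunion : Finset.univ.biUnion E = G.edgeFinset)
    (hE0 : ((E 0).card : ℝ) ≤ ((t : ℝ) / 2) * (s.choose 2))
    (hconn : ∀ i, i ≠ 0 → ∀ a b : Fin t × Fin s,
      a ∈ (SimpleGraph.fromEdgeSet (↑(E i) : Set (Sym2 (Fin t × Fin s)))).support →
      b ∈ (SimpleGraph.fromEdgeSet (↑(E i) : Set (Sym2 (Fin t × Fin s)))).support →
      (SimpleGraph.fromEdgeSet (↑(E i) : Set (Sym2 (Fin t × Fin s)))).Reachable a b) :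
    (t : ℝ) / 2 ≤ (l : ℝ) := by
  classical
  have hs2 : 2 ≤ s := by
    by_contra h
    push_neg at h
    interval_cases s <;> omega
  -- degree of every vertex is s - 1
  have hdeg : ∀ v : Fin t × Fin s, G.degree v = s - 1 := by
    intro v
    have hnb : G.neighborFinset v =
        ((Finset.univ : Finset (Fin s)).image (fun j => (v.1, j))).erase v := by
      ext b
      simp only [SimpleGraph.mem_neighborFinset, hG, Finset.mem_erase,
        Finset.mem_image, Finset.mem_univ, true_and]
      constructor
      · rintro ⟨h1, h2⟩
        exact ⟨h2.symm, b.2, by rw [h1]⟩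
      · rintro ⟨h1, j, h2⟩
        subst h2
        exact ⟨rfl, h1.symm⟩
    have hinj : Function.Injective (fun j : Fin s => (v.1, j)) := by
      intro a b hab; simpa using hab
    have hvmem : v ∈ (Finset.univ : Finset (Fin s)).image (fun j => (v.1, j)) := by
      exact Finset.mem_image.2 ⟨v.2, Finset.mem_univ _, rfl⟩
    rw [SimpleGraph.degree, hnb, Finset.card_erase_of_mem hvmem,
      Finset.card_image_of_injective _ hinj, Finset.card_univ, Fintype.card_fin]
  -- edge count of G
  have hcard : G.edgeFinset.card = t * s.choose 2 := by
    have hsum := G.sum_degrees_eq_twice_card_edges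
    have h1 : ∑ v : Fin t × Fin s, G.degree v = t * s * (s - 1) := by
      rw [Finset.sum_congr rfl (fun v _ => hdeg v)]
      simp [Finset.card_univ, mul_comm, mul_assoc]
    have h2 : 2 * (t * s.choose 2) = t * s * (s - 1) := by
      rw [Nat.choose_two_right]
      obtain ⟨m, rfl⟩ : ∃ m, s = m + 1 := ⟨s - 1, by omega⟩
      have : (m + 1) * m % 2 = 0 := by
        rcases Nat.even_or_odd m with ⟨k, hk⟩ | ⟨k, hk⟩ <;> subst hk <;> ring_nf <;> omega
      simp only [Nat.add_sub_cancel]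
      have h3 : (m + 1) * m / 2 * 2 = (m + 1) * m := Nat.div_mul_cancel (by omega)
      nlinarith [h3]
    omega
  -- each E i (i ≠ 0) has at most C(s,2) edges
  have hEi : ∀ i : Fin (l + 1), i ≠ 0 → (E i).card ≤ s.choose 2 := by
    intro i hi
    have hsub : E i ⊆ G.edgeFinset := by
      rw [← hunion]; exact Finset.subset_biUnion_of_mem E (Finset.mem_univ i)
    set H := SimpleGraph.fromEdgeSet (↑(E i) : Set (Sym2 (Fin t × Fin s))) with hH
    have hedge : ∀ p q : Fin t × Fin s, s(p, q) ∈ E i → G.Adj p q := by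
      intro p q hpq
      have := hsub hpq
      rw [SimpleGraph.mem_edgeFinset, SimpleGraph.mem_edgeSet] at this
      exact this
    have hHadj : ∀ a b, H.Adj a b → G.Adj a b := by
      intro a b hab
      rw [hH, SimpleGraph.fromEdgeSet_adj] at hab
      exact hedge a b hab.1
    have hreach_fst : ∀ a b, H.Reachable a b → a.1 = b.1 := by
      intro a b ⟨w⟩
      induction w with
      | nil => rfl
      | cons h p ih => exact ((hG _ _).1 (hHadj _ _ h)).1.trans ih
    rcases (E i).eq_empty_or_nonempty with he | ⟨e₀, he₀⟩
    · simp [he]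
    · -- pick a base vertex
      induction e₀ using Sym2.ind with
      | _ x y =>
      have hGxy : G.Adj x y := hedge x y he₀
      have hHxy : H.Adj x y := by
        rw [hH, SimpleGraph.fromEdgeSet_adj]
        exact ⟨he₀, hGxy.ne⟩
      have hxsupp : x ∈ H.support := ⟨y, hHxy⟩
      set c := x.1 with hc
      -- every endpoint of every edge of E i has first coordinate c
      have hfst : ∀ e ∈ E i, ∀ v ∈ e, v.1 = c := by
        intro e he v hv
        induction e using Sym2.ind with
        | _ p q =>
        have hGpq : G.Adj p q := hedge p q he
        have hHpq : H.Adj p q := by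
          rw [hH, SimpleGraph.fromEdgeSet_adj]; exact ⟨he, hGpq.ne⟩
        have hp : p.1 = c := hreach_fst _ _ (hconn i hi p x ⟨q, hHpq⟩ hxsupp)
        have hq : q.1 = c := hreach_fst _ _ (hconn i hi q x ⟨p, hHpq.symm⟩ hxsupp)
        rcases Sym2.mem_iff.1 hv with rfl | rfl
        · exact hp
        · exact hq
      -- map edges to Sym2 (Fin s) via second coordinates
      have hmaps : ∀ e ∈ E i, Sym2.map Prod.snd e ∈ (⊤ : SimpleGraph (Fin s)).edgeFinset := by
        intro e he
        induction e using Sym2.ind with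
        | _ p q =>
        have hGpq : G.Adj p q := hedge p q he
        have hpq : p ≠ q := hGpq.ne
        have h1 : p.1 = q.1 := ((hG _ _).1 hGpq).1
        have h2 : p.2 ≠ q.2 := by
          intro h; exact hpq (Prod.ext h1 h)
        simp [SimpleGraph.mem_edgeFinset, SimpleGraph.mem_edgeSet, h2]
      have hinj : Set.InjOn (Sym2.map Prod.snd) (E i : Set (Sym2 (Fin t × Fin s))) := by
        intro e1 h1 e2 h2 heq
        have key : ∀ e ∈ E i, Sym2.map (fun u : Fin s => ((c, u) : Fin t × Fin s))
            (Sym2.map Prod.snd e) = e := by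
          intro e he
          induction e using Sym2.ind with
          | _ p q =>
          have hp : p.1 = c := hfst _ he p (Sym2.mem_mk_left p q)
          have hq : q.1 = c := hfst _ he q (Sym2.mem_mk_right p q)
          simp only [Sym2.map_pair_eq]
          rw [Sym2.eq_iff]
          left
          exact ⟨Prod.ext_iff.2 ⟨hp.symm, rfl⟩, Prod.ext_iff.2 ⟨hq.symm, rfl⟩⟩
        calc e1 = Sym2.map (fun u => (c, u)) (Sym2.map Prod.snd e1) := (key e1 h1).symm
          _ = Sym2.map (fun u => (c, u)) (Sym2.map Prod.snd e2) := by rw [heq]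
          _ = e2 := key e2 h2
      calc (E i).card ≤ (⊤ : SimpleGraph (Fin s)).edgeFinset.card :=
            Finset.card_le_card_of_injOn _ hmaps hinj
        _ = s.choose 2 := by
            rw [SimpleGraph.card_edgeFinset_top_eq_card_choose_two, Fintype.card_fin]
  -- total sum
  have hsum : ∑ i : Fin (l + 1), (E i).card = t * s.choose 2 := by
    rw [← hcard, ← hunion, Finset.card_biUnion]
    intro i _ j _ hij
    exact hdisj i j hij
  have hrest : ∑ i ∈ Finset.univ.erase 0, (E i).card ≤ l * s.choose 2 := by
    calc ∑ i ∈ Finset.univ.erase 0, (E i).card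
        ≤ ∑ _i ∈ Finset.univ.erase 0, s.choose 2 :=
          Finset.sum_le_sum (fun i hi => hEi i (Finset.mem_erase.1 hi).1)
      _ = l * s.choose 2 := by
          rw [Finset.sum_const, Finset.card_erase_of_mem (Finset.mem_univ _),
            Finset.card_univ, Fintype.card_fin, Nat.add_sub_cancel, smul_eq_mul]
  have hsplit : (E 0).card + ∑ i ∈ Finset.univ.erase 0, (E i).card = t * s.choose 2 := by
    rw [← hsum, ← Finset.add_sum_erase _ _ (Finset.mem_univ 0)]
  -- now pass to ℝ
  have hC : (0:ℝ) < s.choose 2 := by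
    have := Nat.choose_pos hs2
    positivity
  have hkey : (t : ℝ) * s.choose 2 ≤ (E 0).card + l * s.choose 2 := by
    have h : t * s.choose 2 ≤ (E 0).card + l * s.choose 2 := by
      rw [← hsplit]
      exact Nat.add_le_add_left hrest _
    exact_mod_cast h
  have : ((t : ℝ) / 2) * s.choose 2 ≤ (l : ℝ) * s.choose 2 := by linarith
  exact le_of_mul_le_mul_right this hC
end

section
/- For every ε > 0 and sufficiently large n, every graph G on n vertices with minimum degree at least εn admits an edge covering E = E₁ ∪ … ∪ E_ℓ with ℓ = ⌈2ε⁻² log₂ n⌉ such that each E_i spans a subgraph of diameter at most 3. -/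
/-!
Let `C(v, w)` be the set of edges on walks `v - a - b - w` of length 3. Two vertices covered by
`C(v, w)` sit at positions `k` and `m` on such walks, so they are joined through `v` by a walk of
length `k + m` or through `w` by one of length `6 - k - m`, and one of the two is at most 3.
An edge `ab` lies in `C(v, w)` whenever `v ∈ N(a)` and `w ∈ N(b)`, that is for at least `ε²n²` of
the `n²` pairs, so by averaging some pair covers an `ε²`-fraction of the edges not yet covered.
Choosing such pairs greedily leaves at most `(1 - ε²)^ℓ n² < 1` edges uncovered after
`ℓ = ⌈2ε⁻² log₂ n⌉` rounds.
-/

open Finset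

section GreedyCover

variable {α ι : Type*} [Fintype ι]

theorem sum_ncard_setOf_mem_eq_sum_ncard_inter (s : Finset α) (C : ι → Set α) :
    ∑ x ∈ s, {i | x ∈ C i}.ncard = ∑ i, ((s : Set α) ∩ C i).ncard := by
  classical
  have hcard := sum_card_bipartiteAbove_eq_sum_card_bipartiteBelow
    (s := s) (t := univ) (r := fun x i => x ∈ C i)
  convert hcard using 2 with x - i -
  · rw [← Set.ncard_coe_finset, bipartiteAbove]; simp
  · rw [← Set.ncard_coe_finset, bipartiteBelow]; simp [Set.inter_def]

theorem exists_mul_ncard_le_ncard_inter [Nonempty ι] {U : Set α} (hU : U.Finite)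
    (C : ι → Set α) {δ : ℝ} (hC : ∀ x ∈ U, δ * Fintype.card ι ≤ {i | x ∈ C i}.ncard) :
    ∃ i, δ * U.ncard ≤ (U ∩ C i).ncard := by
  have hsum : ∑ _i : ι, δ * U.ncard ≤ ∑ i, ((U ∩ C i).ncard : ℝ) := calc
    ∑ _i : ι, δ * U.ncard = ∑ _x ∈ hU.toFinset, δ * Fintype.card ι := by
      simp [Set.ncard_eq_toFinset_card U hU]; ring
    _ ≤ ∑ x ∈ hU.toFinset, ({i | x ∈ C i}.ncard : ℝ) :=
      sum_le_sum fun x hx => hC x (hU.mem_toFinset.mp hx)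
    _ = ∑ i, ((U ∩ C i).ncard : ℝ) := by
      exact_mod_cast (hU.coe_toFinset ▸ sum_ncard_setOf_mem_eq_sum_ncard_inter hU.toFinset C)
  obtain ⟨i, -, hi⟩ := exists_le_of_sum_le univ_nonempty hsum
  exact ⟨i, hi⟩

theorem exists_ncard_diff_iUnion_le [Nonempty ι] {U : Set α} (hU : U.Finite)
    (C : ι → Set α) {δ : ℝ} (hC : ∀ x ∈ U, δ * Fintype.card ι ≤ {i | x ∈ C i}.ncard)
    (k : ℕ) : ∃ f : Fin k → ι, ((U \ ⋃ j, C (f j)).ncard : ℝ) ≤ (1 - δ) ^ k * U.ncard := by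
  induction k generalizing U with
  | zero => exact ⟨Fin.elim0, by simp⟩
  | succ k ih =>
    obtain rfl | ⟨x, hx⟩ := U.eq_empty_or_nonempty
    · exact ⟨fun _ => Classical.arbitrary ι, by simp⟩
    have hδ : δ ≤ 1 := by
      have hpos : (0 : ℝ) < Fintype.card ι := by exact_mod_cast Fintype.card_pos
      have hle : ({i | x ∈ C i}.ncard : ℝ) ≤ Fintype.card ι := by
        exact_mod_cast (Set.ncard_le_card _).trans (Nat.card_eq_fintype_card).le
      nlinarith [hC x hx]
    obtain ⟨i, hi⟩ := exists_mul_ncard_le_ncard_inter hU C hC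
    obtain ⟨f, hf⟩ := ih (hU.sdiff (t := C i)) fun y hy => hC y hy.1
    refine ⟨Fin.cons i f, ?_⟩
    have hunion : U \ ⋃ j, C ((Fin.cons i f : Fin (k + 1) → ι) j) = (U \ C i) \ ⋃ j, C (f j) := by
      ext y; simp [Fin.exists_fin_succ, and_assoc]
    have hsplit : ((U ∩ C i).ncard : ℝ) + (U \ C i).ncard = U.ncard := by
      exact_mod_cast Set.ncard_inter_add_ncard_sdiff_eq_ncard U (C i) hU
    rw [hunion]
    calc (((U \ C i) \ ⋃ j, C (f j)).ncard : ℝ) ≤ (1 - δ) ^ k * (U \ C i).ncard := hf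
      _ ≤ (1 - δ) ^ k * ((1 - δ) * U.ncard) := by
        have : 0 ≤ 1 - δ := by linarith
        gcongr
        linarith
      _ = (1 - δ) ^ (k + 1) * U.ncard := by ring

end GreedyCover

namespace SimpleGraph

variable {V : Type*}

theorem edist_le_of_edist_endpoints_le {H : SimpleGraph V} {v w x y : V} {d k m : ℕ}
    (hk : k ≤ d) (hm : m ≤ d) (hvx : H.edist v x ≤ k) (hxw : H.edist x w ≤ ↑(d - k))
    (hvy : H.edist v y ≤ m) (hyw : H.edist y w ≤ ↑(d - m)) : H.edist x y ≤ d := by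
  by_cases hkm : k + m ≤ d
  · calc H.edist x y ≤ H.edist x v + H.edist v y := SimpleGraph.edist_triangle
      _ ≤ k + m := by rw [edist_comm]; gcongr
      _ ≤ d := by exact_mod_cast hkm
  · calc H.edist x y ≤ H.edist x w + H.edist w y := SimpleGraph.edist_triangle
      _ ≤ ↑(d - k) + ↑(d - m) := by rw [edist_comm (u := w)]; gcongr
      _ ≤ d := by exact_mod_cast (by omega : d - k + (d - m) ≤ d)

theorem Walk.exists_edist_le_of_mem_support {H : SimpleGraph V} {v w u : V} (p : H.Walk v w)
    (hu : u ∈ p.support) :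
    ∃ k ≤ p.length, H.edist v u ≤ k ∧ H.edist u w ≤ ↑(p.length - k) := by
  classical
  have hlen := congrArg Walk.length (p.take_spec hu)
  rw [Walk.length_append] at hlen
  refine ⟨(p.takeUntil u hu).length, by omega, edist_le _, ?_⟩
  exact (edist_le _).trans (by rw [← hlen, Nat.add_sub_cancel_left])

variable (G : SimpleGraph V)

def edgesOnWalks (d : ℕ) (v w : V) : Set (Sym2 V) :=
  {e | ∃ p : G.Walk v w, p.length = d ∧ e ∈ p.edges}

theorem edgesOnWalks_subset_edgeSet (d : ℕ) (v w : V) : G.edgesOnWalks d v w ⊆ G.edgeSet := by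
  rintro e ⟨p, -, he⟩
  exact p.edges_subset_edgeSet he

theorem edgeSetDiamLE_edgesOnWalks (d : ℕ) (v w : V) : EdgeSetDiamLE (G.edgesOnWalks d v w) d := by
  set H := fromEdgeSet (G.edgesOnWalks d v w)
  -- a covered vertex lies on a walk of length `d` from `v` to `w` all of whose edges are in `H`
  have hpos : ∀ x ∈ H.support, ∃ k ≤ d, H.edist v x ≤ k ∧ H.edist x w ≤ ↑(d - k) := by
    intro x hx
    obtain ⟨y, hxy, -⟩ := hx
    obtain ⟨p, rfl, hp⟩ := hxy
    have hH : ∀ e ∈ p.edges, e ∈ H.edgeSet := fun e he => by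
      rw [edgeSet_fromEdgeSet]
      exact ⟨⟨p, rfl, he⟩, G.not_isDiag_of_mem_edgeSet (p.edges_subset_edgeSet he)⟩
    simpa using (p.transfer H hH).exists_edist_le_of_mem_support
      (by simpa using p.fst_mem_support_of_mem_edges hp)
  intro x y hx hy
  obtain ⟨k, hk, hvx, hxw⟩ := hpos x hx
  obtain ⟨m, hm, hvy, hyw⟩ := hpos y hy
  exact edist_le_of_edist_endpoints_le hk hm hvx hxw hvy hyw

theorem ncard_neighborSet_mul_le_ncard_edgesOnWalks_three [Finite V] {a b : V} (hab : G.Adj a b) :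
    (G.neighborSet a).ncard * (G.neighborSet b).ncard ≤
      {p : V × V | s(a, b) ∈ G.edgesOnWalks 3 p.1 p.2}.ncard := by
  rw [← Set.ncard_prod]
  refine Set.ncard_le_ncard ?_ (Set.toFinite _)
  rintro ⟨v, w⟩ ⟨hva, hbw⟩
  exact ⟨.cons hva.symm (.cons hab (.cons hbw .nil)), rfl, by simp⟩

theorem sq_le_ncard_setOf_mem_edgesOnWalks_three [Finite V] {D : ℝ} (hD : 0 ≤ D)
    (hdeg : ∀ v, D ≤ (G.neighborSet v).ncard) {e : Sym2 V} (he : e ∈ G.edgeSet) :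
    D ^ 2 ≤ {p : V × V | e ∈ G.edgesOnWalks 3 p.1 p.2}.ncard := by
  induction e using Sym2.ind with | _ a b => ?_
  calc D ^ 2 = D * D := sq D
    _ ≤ (G.neighborSet a).ncard * (G.neighborSet b).ncard := by
      gcongr
      exacts [hdeg a, hdeg b]
    _ ≤ _ := by exact_mod_cast G.ncard_neighborSet_mul_le_ncard_edgesOnWalks_three he

theorem ncard_edgeSet_le_sq [Fintype V] : G.edgeSet.ncard ≤ Fintype.card V ^ 2 := by
  classical
  rw [← coe_edgeFinset, Set.ncard_coe_finset]
  exact G.card_edgeFinset_le_card_choose_two.trans (Nat.choose_le_pow _ _)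

theorem ncard_neighborSet_lt_card [Finite V] (v : V) : (G.neighborSet v).ncard < Nat.card V :=
  Set.ncard_lt_card fun h => G.irrefl (h ▸ Set.mem_univ v : v ∈ G.neighborSet v)

end SimpleGraph

theorem one_sub_pow_mul_sq_lt_one {δ x : ℝ} {ℓ : ℕ} (hδ₀ : 0 < δ) (hδ₁ : δ ≤ 1) (hx : 1 < x)
    (hℓ : 2 * δ⁻¹ * Real.logb 2 x ≤ ℓ) : (1 - δ) ^ ℓ * x ^ 2 < 1 := by
  have hlog : 2 * Real.log x < δ * ℓ := calc
    2 * Real.log x < 2 * Real.logb 2 x := by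
      have hlog2 : Real.log 2 < 1 := by linarith [Real.log_two_lt_d9]
      have := Real.log_pos hx
      rw [Real.logb, mul_lt_mul_iff_right₀ two_pos, lt_div_iff₀ (Real.log_pos one_lt_two)]
      nlinarith
    _ = δ * (2 * δ⁻¹ * Real.logb 2 x) := by field_simp
    _ ≤ δ * ℓ := by gcongr
  have hx2 : 0 < x ^ 2 := by positivity
  calc (1 - δ) ^ ℓ * x ^ 2 ≤ Real.exp (-δ) ^ ℓ * x ^ 2 := by
        have : 0 ≤ 1 - δ := by linarith
        gcongr
        exact Real.one_sub_le_exp_neg δ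
    _ = Real.exp (-(δ * ℓ) + 2 * Real.log x) := by
        rw [Real.exp_add, ← Real.exp_nat_mul, ← Real.exp_log hx2, Real.log_pow]
        ring_nf
    _ < 1 := Real.exp_lt_one_iff.mpr (by linarith)

/-- For every ε > 0 and sufficiently large n, every graph on n
vertices with minimum degree at least εn admits a covering of its edge set by
ℓ = ⌈2ε⁻² log₂ n⌉ sets, each of diameter at most 3. -/
theorem stmt_13 (ε : ℝ) (hε : 0 < ε) :
    ∃ N : ℕ, ∀ n : ℕ, N ≤ n → ∀ G : SimpleGraph (Fin n),
      (∀ v : Fin n, ε * n ≤ ((G.neighborSet v).ncard : ℝ)) →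
      ∃ E : Fin ⌈2 * ε⁻¹ ^ 2 * Real.logb 2 n⌉₊ → Set (Sym2 (Fin n)),
        (⋃ i, E i) = G.edgeSet ∧ ∀ i, EdgeSetDiamLE (E i) 3 := by
  refine ⟨2, fun n hn G hdeg => ?_⟩
  have : NeZero n := ⟨by omega⟩
  have hε₁ : ε < 1 := by
    have hlt : ((G.neighborSet 0).ncard : ℝ) < n := by
      exact_mod_cast Nat.card_fin n ▸ G.ncard_neighborSet_lt_card 0
    nlinarith [hdeg 0]
  have hcover : ∀ e ∈ G.edgeSet, ε ^ 2 * Fintype.card (Fin n × Fin n) ≤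
      {p : Fin n × Fin n | e ∈ G.edgesOnWalks 3 p.1 p.2}.ncard := by
    intro e he
    have hcard : ε ^ 2 * Fintype.card (Fin n × Fin n) = (ε * n) ^ 2 := by simp; ring
    exact hcard ▸ G.sq_le_ncard_setOf_mem_edgesOnWalks_three (by positivity) hdeg he
  set ℓ := ⌈2 * ε⁻¹ ^ 2 * Real.logb 2 n⌉₊ with hℓ
  obtain ⟨f, hf⟩ := exists_ncard_diff_iUnion_le G.edgeSet.toFinite
    (fun p : Fin n × Fin n => G.edgesOnWalks 3 p.1 p.2) hcover ℓ
  have hsmall : ((G.edgeSet \ ⋃ j, G.edgesOnWalks 3 (f j).1 (f j).2).ncard : ℝ) < 1 := calc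
    _ ≤ (1 - ε ^ 2) ^ ℓ * G.edgeSet.ncard := hf
    _ ≤ (1 - ε ^ 2) ^ ℓ * (n : ℝ) ^ 2 := by
      have : 0 ≤ 1 - ε ^ 2 := by nlinarith
      gcongr
      exact_mod_cast Fintype.card_fin n ▸ G.ncard_edgeSet_le_sq
    _ < 1 := one_sub_pow_mul_sq_lt_one (by positivity) (by nlinarith) (by exact_mod_cast hn)
      (by rw [hℓ, ← inv_pow]; exact Nat.le_ceil _)
  have huncovered : G.edgeSet \ ⋃ j, G.edgesOnWalks 3 (f j).1 (f j).2 = ∅ :=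
    (Set.ncard_eq_zero (Set.toFinite _)).mp (Nat.lt_one_iff.mp (by exact_mod_cast hsmall))
  exact ⟨fun j => G.edgesOnWalks 3 (f j).1 (f j).2,
    (Set.iUnion_subset fun j => G.edgesOnWalks_subset_edgeSet 3 _ _).antisymm
      (Set.sdiff_eq_empty.mp huncovered),
    fun j => G.edgeSetDiamLE_edgesOnWalks 3 _ _⟩
end

section
/- Every graph G with n vertices and minimum degree at least εn (ε > 0) admits an edge covering E = E₁ ∪ … ∪ E_ℓ with ℓ < ε⁻² such that each E_i has diameter at most 5. -/
lemma diam_aux {V : Type*} (G : SimpleGraph V) (a b : V) :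
    EdgeSetDiamLE {e | e ∈ G.edgeSet ∧ ∃ p : G.Walk a b, p.length ≤ 5 ∧ e ∈ p.edges} 5 := by
  set E' : Set (Sym2 V) := {e | e ∈ G.edgeSet ∧ ∃ p : G.Walk a b, p.length ≤ 5 ∧ e ∈ p.edges}
    with hE'
  classical
  set H := SimpleGraph.fromEdgeSet E' with hH
  have key : ∀ x ∈ H.support, H.edist x a + H.edist x b ≤ 5 := by
    intro x hx
    obtain ⟨y, hxy⟩ := (SimpleGraph.mem_support H).mp hx
    have hmem : s(x, y) ∈ E' := ((SimpleGraph.fromEdgeSet_adj E').mp hxy).1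
    obtain ⟨-, p, hp5, hpe⟩ := hmem
    have hsub : ∀ e ∈ p.edges, e ∈ H.edgeSet := by
      intro e he
      have heG : e ∈ G.edgeSet := p.edges_subset_edgeSet he
      rw [hH, SimpleGraph.edgeSet_fromEdgeSet]
      exact ⟨⟨heG, p, hp5, he⟩, G.not_isDiag_of_mem_edgeSet heG⟩
    set q : H.Walk a b := p.transfer H hsub with hq
    have hxs : x ∈ q.support := by
      rw [hq, SimpleGraph.Walk.support_transfer]
      exact p.fst_mem_support_of_mem_edges hpe
    have hlen : (q.takeUntil x hxs).length + (q.dropUntil x hxs).length = q.length := by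
      have := q.take_spec hxs
      conv_rhs => rw [← this]
      rw [SimpleGraph.Walk.length_append]
    have h1 : H.edist x a ≤ (q.takeUntil x hxs).length := by
      rw [SimpleGraph.edist_comm]
      exact SimpleGraph.edist_le (q.takeUntil x hxs)
    have h2 : H.edist x b ≤ (q.dropUntil x hxs).length := SimpleGraph.edist_le _
    have hql : q.length = p.length := p.length_transfer hsub
    calc H.edist x a + H.edist x b ≤
        ((q.takeUntil x hxs).length : ℕ∞) + (q.dropUntil x hxs).length := add_le_add h1 h2
      _ = (q.length : ℕ∞) := by rw [← hlen]; push_cast; ring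
      _ ≤ 5 := by rw [hql]; exact_mod_cast hp5
  intro x y hx hy
  have hxk := key x hx
  have hyk := key y hy
  have hxa : H.edist x a ≠ ⊤ := by
    intro h; rw [h] at hxk; simp [top_add] at hxk
  have hxb : H.edist x b ≠ ⊤ := by
    intro h; rw [h] at hxk; simp [add_top] at hxk
  have hya : H.edist y a ≠ ⊤ := by
    intro h; rw [h] at hyk; simp [top_add] at hyk
  have hyb : H.edist y b ≠ ⊤ := by
    intro h; rw [h] at hyk; simp [add_top] at hyk
  obtain ⟨dxa, hdxa⟩ : ∃ k : ℕ, (k : ℕ∞) = H.edist x a := ⟨_, ENat.coe_toNat hxa⟩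
  obtain ⟨dxb, hdxb⟩ : ∃ k : ℕ, (k : ℕ∞) = H.edist x b := ⟨_, ENat.coe_toNat hxb⟩
  obtain ⟨dya, hdya⟩ : ∃ k : ℕ, (k : ℕ∞) = H.edist y a := ⟨_, ENat.coe_toNat hya⟩
  obtain ⟨dyb, hdyb⟩ : ∃ k : ℕ, (k : ℕ∞) = H.edist y b := ⟨_, ENat.coe_toNat hyb⟩
  have hxk' : dxa + dxb ≤ 5 := by
    rw [← hdxa, ← hdxb] at hxk; exact_mod_cast hxk
  have hyk' : dya + dyb ≤ 5 := by
    rw [← hdya, ← hdyb] at hyk; exact_mod_cast hyk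
  have tri_a : H.edist x y ≤ (dxa : ℕ∞) + dya := by
    calc H.edist x y ≤ H.edist x a + H.edist a y := SimpleGraph.edist_triangle
      _ = (dxa : ℕ∞) + dya := by
        rw [show H.edist a y = H.edist y a from SimpleGraph.edist_comm, ← hdxa, ← hdya]
  have tri_b : H.edist x y ≤ (dxb : ℕ∞) + dyb := by
    calc H.edist x y ≤ H.edist x b + H.edist b y := SimpleGraph.edist_triangle
      _ = (dxb : ℕ∞) + dyb := by
        rw [show H.edist b y = H.edist y b from SimpleGraph.edist_comm, ← hdxb, ← hdyb]
  by_cases hc : dxa + dya ≤ 5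
  · calc H.edist x y ≤ (dxa : ℕ∞) + dya := tri_a
      _ = ((dxa + dya : ℕ) : ℕ∞) := by push_cast; ring
      _ ≤ 5 := by exact_mod_cast hc
  · have hc' : dxb + dyb ≤ 5 := by omega
    calc H.edist x y ≤ (dxb : ℕ∞) + dyb := tri_b
      _ = ((dxb + dyb : ℕ) : ℕ∞) := by push_cast; ring
      _ ≤ 5 := by exact_mod_cast hc'

/-- Every graph with n vertices and minimum degree at least εn admits
a covering of its edge set by ℓ < ε⁻² sets, each of diameter at most 5. -/
theorem stmt_14 {V : Type*} [Fintype V] (G : SimpleGraph V) (ε : ℝ) (hε : 0 < ε)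
    (n : ℕ) (hn : n = Fintype.card V)
    (hdeg : ∀ v : V, ε * n ≤ ((G.neighborSet v).ncard : ℝ)) :
    ∃ (l : ℕ) (E : Fin l → Set (Sym2 V)),
      (l : ℝ) < ε⁻¹ ^ 2 ∧ (⋃ i, E i) = G.edgeSet ∧ ∀ i, EdgeSetDiamLE (E i) 5 := by
  classical
  set P : Finset V → Prop := fun s => ∀ a ∈ s, ∀ b ∈ s, a ≠ b → 2 < G.edist a b with hPdef
  obtain ⟨S, hSmem, hSmax⟩ := Finset.exists_max_image (Finset.univ.filter P) Finset.card
      ⟨∅, by simp [hPdef]⟩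
  rw [Finset.mem_filter] at hSmem
  have hPS : P S := hSmem.2
  have hSmax' : ∀ s : Finset V, P s → s.card ≤ S.card := fun s hs =>
    hSmax s (Finset.mem_filter.mpr ⟨Finset.mem_univ s, hs⟩)
  -- every vertex is within distance 2 of some element of S
  have hdom : ∀ v : V, ∃ u ∈ S, G.edist u v ≤ 2 := by
    intro v
    by_contra hcon
    push_neg at hcon
    have hvS : v ∉ S := by
      intro hv
      have := hcon v hv
      simp [SimpleGraph.edist_self] at this
    have hins : P (insert v S) := by
      intro a ha b hb hab
      rcases Finset.mem_insert.mp ha with rfl | ha'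
      · rcases Finset.mem_insert.mp hb with rfl | hb'
        · exact absurd rfl hab
        · have := hcon b hb'
          rwa [show G.edist b a = G.edist a b from SimpleGraph.edist_comm] at this
      · rcases Finset.mem_insert.mp hb with rfl | hb'
        · exact hcon a ha'
        · exact hPS a ha' b hb' hab
    have := hSmax' _ hins
    rw [Finset.card_insert_of_notMem hvS] at this
    omega
  -- counting : |S| < ε⁻¹
  set N : V → Finset V := fun v => insert v (G.neighborFinset v) with hNdef
  have hdisj : ∀ u ∈ S, ∀ v ∈ S, u ≠ v → Disjoint (N u) (N v) := by
    intro u hu v hv huv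
    rw [Finset.disjoint_left]
    intro w hwu hwv
    have h1 : G.edist u w ≤ 1 := by
      rcases Finset.mem_insert.mp hwu with rfl | h
      · simp [SimpleGraph.edist_self]
      · exact le_of_eq (SimpleGraph.edist_eq_one_iff_adj.mpr
          ((G.mem_neighborFinset _ _).mp h))
    have h2 : G.edist w v ≤ 1 := by
      rcases Finset.mem_insert.mp hwv with rfl | h
      · simp [SimpleGraph.edist_self]
      · exact le_of_eq (SimpleGraph.edist_eq_one_iff_adj.mpr
          ((G.mem_neighborFinset _ _).mp h).symm)
    have hle : G.edist u v ≤ 2 :=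
      le_trans SimpleGraph.edist_triangle (by
        calc G.edist u w + G.edist w v ≤ 1 + 1 := add_le_add h1 h2
          _ = 2 := by norm_num)
    exact absurd hle (not_le.mpr (hPS u hu v hv huv))
  have hsum : ∑ v ∈ S, (N v).card ≤ n := by
    rw [← Finset.card_biUnion hdisj, hn]
    exact Finset.card_le_univ _
  have hNcard : ∀ v, (N v).card = G.degree v + 1 := by
    intro v
    rw [hNdef]
    simp only []
    rw [Finset.card_insert_of_notMem (G.notMem_neighborFinset_self v),
      G.card_neighborFinset_eq_degree]
  have hdeg' : ∀ v, ε * n ≤ (G.degree v : ℝ) := by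
    intro v
    have h := hdeg v
    have : (G.neighborSet v).ncard = G.degree v := by
      rw [← Nat.card_coe_set_eq, Nat.card_eq_fintype_card]
      exact G.card_neighborSet_eq_degree v
    rwa [this] at h
  have hmain : (S.card : ℝ) * (ε * n + 1) ≤ n := by
    have h1 : (S.card) • (ε * n + 1) ≤ ∑ v ∈ S, ((N v).card : ℝ) :=
      Finset.card_nsmul_le_sum S _ _ (fun v _ => by
        rw [hNcard v]; push_cast; linarith [hdeg' v])
    have h2 : (∑ v ∈ S, ((N v).card : ℝ)) ≤ n := by
      rw [← Nat.cast_sum]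
      exact_mod_cast hsum
    rw [nsmul_eq_mul] at h1
    linarith
  have ht : (S.card : ℝ) < ε⁻¹ := by
    rcases Nat.eq_zero_or_pos S.card with h0 | h0
    · rw [h0]; simpa using inv_pos.mpr hε
    · have hc : (1:ℝ) ≤ S.card := by exact_mod_cast h0
      have hεn : (0:ℝ) ≤ ε * n := by positivity
      have hexp : (S.card : ℝ) * ε * n + S.card ≤ n := by nlinarith [hmain]
      have hεc : (S.card : ℝ) * ε < 1 := by
        by_contra hcc
        push_neg at hcc
        have hn1 : (1:ℝ) ≤ n := by nlinarith
        have : (n:ℝ) * 1 ≤ n * ((S.card:ℝ) * ε) :=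
          mul_le_mul_of_nonneg_left hcc (by linarith)
        nlinarith
      have := mul_lt_mul_of_pos_right hεc (inv_pos.mpr hε)
      rwa [mul_assoc, mul_inv_cancel₀ hε.ne', mul_one, one_mul] at this
  -- the covering
  have hcardS : Fintype.card (↥S × ↥S) = S.card * S.card := by
    simp [Fintype.card_prod, Fintype.card_coe]
  let eqv : (↥S × ↥S) ≃ Fin (S.card * S.card) := Fintype.equivFinOfCardEq hcardS
  refine ⟨S.card * S.card, fun i =>
    {e | e ∈ G.edgeSet ∧ ∃ p : G.Walk ((eqv.symm i).1 : V) ((eqv.symm i).2 : V),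
      p.length ≤ 5 ∧ e ∈ p.edges}, ?_, ?_, ?_⟩
  · push_cast
    have h0 : (0:ℝ) ≤ (S.card : ℝ) := Nat.cast_nonneg _
    nlinarith [ht]
  · apply Set.Subset.antisymm
    · intro e he
      simp only [Set.mem_iUnion] at he
      obtain ⟨i, hi⟩ := he
      exact hi.1
    · intro e he
      induction e using Sym2.ind with
      | _ u v =>
      rw [SimpleGraph.mem_edgeSet G] at he
      obtain ⟨x, hxS, hxu⟩ := hdom u
      obtain ⟨y, hyS, hyv⟩ := hdom v
      have hxu' : G.edist x u ≠ ⊤ := fun h => by rw [h] at hxu; exact absurd hxu (by decide)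
      have hyv' : G.edist y v ≠ ⊤ := fun h => by rw [h] at hyv; exact absurd hyv (by decide)
      obtain ⟨p1, hp1⟩ := SimpleGraph.exists_walk_of_edist_ne_top hxu'
      obtain ⟨p2, hp2⟩ := SimpleGraph.exists_walk_of_edist_ne_top hyv'
      have hp1l : p1.length ≤ 2 := by
        have : (p1.length : ℕ∞) ≤ 2 := by rw [hp1]; exact hxu
        exact_mod_cast this
      have hp2l : p2.length ≤ 2 := by
        have : (p2.length : ℕ∞) ≤ 2 := by rw [hp2]; exact hyv
        exact_mod_cast this
      set p : G.Walk x y := p1.append (SimpleGraph.Walk.cons he p2.reverse) with hpdef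
      have hplen : p.length ≤ 5 := by
        rw [hpdef, SimpleGraph.Walk.length_append, SimpleGraph.Walk.length_cons,
          SimpleGraph.Walk.length_reverse]
        omega
      have hpedge : s(u, v) ∈ p.edges := by
        rw [hpdef, SimpleGraph.Walk.edges_append, SimpleGraph.Walk.edges_cons]
        simp
      refine Set.mem_iUnion.mpr ⟨eqv ⟨⟨x, hxS⟩, ⟨y, hyS⟩⟩, ?_⟩
      refine ⟨(SimpleGraph.mem_edgeSet G).mpr he, ?_⟩
      rw [Equiv.symm_apply_apply]
      exact ⟨p, hplen, hpedge⟩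
  · intro i
    exact diam_aux G _ _
end

section
/- Every graph G with n vertices and minimum degree at least εn (ε > 0) admits an edge covering E = E₁ ∪ … ∪ E_ℓ with ℓ < ε⁻¹ such that each E_i has diameter at most 6. -/
namespace SimpleGraph

variable {V : Type*} (G : SimpleGraph V)

/-- The edge set of the subgraph `G_r(v)` induced on the vertices within distance `r` of `v`. -/
def closedBallEdges (v : V) (r : ℕ) : Set (Sym2 V) :=
  {e | e ∈ G.edgeSet ∧ ∀ x ∈ e, G.edist x v ≤ r}

variable {G}

lemma Walk.edist_le_length_of_mem_support {u v x : V} (p : G.Walk u v) (hx : x ∈ p.support) :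
    G.edist x v ≤ p.length := by
  classical
  exact (edist_le (p.dropUntil x hx)).trans
    (by exact_mod_cast p.length_dropUntil_le_length hx)

/-- A geodesic from `a` to `v` stays in the ball, hence is a walk in `G_r(v)`. -/
lemma edist_fromEdgeSet_closedBallEdges_le {a v : V} {r : ℕ} (ha : G.edist a v ≤ r) :
    (fromEdgeSet (G.closedBallEdges v r)).edist a v ≤ r := by
  obtain ⟨p, hp⟩ := exists_walk_of_edist_ne_top (ha.trans_lt (ENat.natCast_lt_top r)).ne
  have hsupport : ∀ x ∈ p.support, G.edist x v ≤ r :=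
    fun x hx ↦ (p.edist_le_length_of_mem_support hx).trans (hp ▸ ha)
  have hedges : ∀ e ∈ p.edges, e ∈ (fromEdgeSet (G.closedBallEdges v r)).edgeSet := by
    intro e he
    have heG : e ∈ G.edgeSet := p.edges_subset_edgeSet he
    rw [edgeSet_fromEdgeSet]
    refine ⟨⟨heG, fun x hx ↦ hsupport x ?_⟩, G.not_isDiag_of_mem_edgeSet heG⟩
    induction e using Sym2.ind with
    | _ c d =>
      rcases Sym2.mem_iff.mp hx with rfl | rfl
      · exact p.fst_mem_support_of_mem_edges he
      · exact p.snd_mem_support_of_mem_edges he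
  calc (fromEdgeSet (G.closedBallEdges v r)).edist a v
      ≤ (p.transfer _ hedges).length := edist_le _
    _ = G.edist a v := by rw [Walk.length_transfer, hp]
    _ ≤ r := ha

lemma edist_le_of_mem_support_fromEdgeSet_closedBallEdges {a v : V} {r : ℕ}
    (ha : a ∈ (fromEdgeSet (G.closedBallEdges v r)).support) : G.edist a v ≤ r := by
  obtain ⟨b, hab⟩ := ha
  exact (fromEdgeSet_adj _ |>.mp hab).1.2 a (Sym2.mem_mk_left a b)

theorem edgeSetDiamLE_closedBallEdges (v : V) (r : ℕ) :
    EdgeSetDiamLE (G.closedBallEdges v r) (2 * r) := by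
  intro a b ha hb
  have hav := edist_fromEdgeSet_closedBallEdges_le
    (edist_le_of_mem_support_fromEdgeSet_closedBallEdges ha)
  have hbv := edist_fromEdgeSet_closedBallEdges_le
    (edist_le_of_mem_support_fromEdgeSet_closedBallEdges hb)
  rw [edist_comm] at hbv
  calc _ ≤ _ := SimpleGraph.edist_triangle
    _ ≤ (r + r : ℕ∞) := add_le_add hav hbv
    _ = ((2 * r : ℕ) : ℕ∞) := by push_cast; ring

theorem iUnion_closedBallEdges_eq_edgeSet {ι : Type*} (c : ι → V) (r : ℕ)
    (hc : ∀ x, ∃ i, G.edist x (c i) ≤ r) :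
    ⋃ i, G.closedBallEdges (c i) (r + 1) = G.edgeSet := by
  refine subset_antisymm (Set.iUnion_subset fun i _ he ↦ he.1) fun e he ↦ ?_
  induction e using Sym2.ind with
  | _ u w =>
    obtain ⟨i, hi⟩ := hc w
    have hw : G.edist w (c i) ≤ (r + 1 : ℕ) := hi.trans (by exact_mod_cast r.le_succ)
    have hu : G.edist u (c i) ≤ (r + 1 : ℕ) :=
      calc G.edist u (c i) ≤ G.edist u w + G.edist w (c i) := SimpleGraph.edist_triangle
        _ ≤ 1 + r := add_le_add (edist_eq_one_iff_adj.mpr he).le hi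
        _ = (r + 1 : ℕ) := by push_cast; ring
    refine Set.mem_iUnion.mpr ⟨i, he, fun x hx ↦ ?_⟩
    rcases Sym2.mem_iff.mp hx with rfl | rfl
    exacts [hu, hw]

variable (G) in
theorem exists_pairwise_lt_edist_forall_edist_le [Finite V] (r : ℕ∞) :
    ∃ S : Set V, S.Pairwise (fun u w ↦ r < G.edist u w) ∧
      ∀ x, ∃ v ∈ S, G.edist x v ≤ r := by
  obtain ⟨S, hS⟩ := Set.toFinite {S : Set V | S.Pairwise (fun u w ↦ r < G.edist u w)}
    |>.exists_maximal ⟨∅, Set.pairwise_empty _⟩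
  refine ⟨S, hS.prop, fun x ↦ ?_⟩
  by_contra! hfar
  have hx : x ∈ S := hS.mem_of_prop_insert <| Set.pairwise_insert.mpr
    ⟨hS.prop, fun v hv _ ↦ ⟨hfar v hv, edist_comm.trans_gt (hfar v hv)⟩⟩
  simpa [edist_self] using hfar x hx

lemma disjoint_insert_neighborFinset [Fintype V] [DecidableEq V] [DecidableRel G.Adj] {u w : V}
    (h : 2 < G.edist u w) :
    Disjoint (insert u (G.neighborFinset u)) (insert w (G.neighborFinset w)) := by
  have hclose : ∀ {y x : V}, x ∈ insert y (G.neighborFinset y) → G.edist y x ≤ 1 := by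
    intro y x hx
    rwa [edist_le_one_iff_adj_or_eq, ← mem_neighborFinset, or_comm, eq_comm,
      ← Finset.mem_insert]
  refine Finset.disjoint_left.mpr fun x hxu hxw ↦ h.not_ge ?_
  calc G.edist u w ≤ G.edist u x + G.edist x w := SimpleGraph.edist_triangle
    _ ≤ 1 + 1 := add_le_add (hclose hxu) (edist_comm.trans_le (hclose hxw))
    _ = 2 := one_add_one_eq_two

lemma ncard_neighborSet_eq_degree [Fintype V] [DecidableRel G.Adj] (v : V) :
    (G.neighborSet v).ncard = G.degree v := by
  rw [← Nat.card_coe_set_eq, Nat.card_eq_fintype_card, card_neighborSet_eq_degree]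

theorem sum_degree_add_one_le_card [Fintype V] [DecidableRel G.Adj] {S : Finset V}
    (hS : (S : Set V).Pairwise fun u w ↦ 2 < G.edist u w) :
    ∑ v ∈ S, (G.degree v + 1) ≤ Fintype.card V := by
  classical
  calc ∑ v ∈ S, (G.degree v + 1) = ∑ v ∈ S, (insert v (G.neighborFinset v)).card := by
        refine Finset.sum_congr rfl fun v _ ↦ ?_
        rw [Finset.card_insert_of_notMem (G.notMem_neighborFinset_self v),
          card_neighborFinset_eq_degree]
    _ = (S.biUnion fun v ↦ insert v (G.neighborFinset v)).card :=
        (Finset.card_biUnion fun _ hu _ hw huw ↦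
          disjoint_insert_neighborFinset (hS hu hw huw)).symm
    _ ≤ Fintype.card V := Finset.card_le_univ _

end SimpleGraph

lemma lt_inv_of_mul_add_one_le {k n ε : ℝ} (hε : 0 < ε) (hn : 0 ≤ n)
    (h : k * (ε * n + 1) ≤ n) : k < ε⁻¹ := by
  by_contra! hk
  have hεk : 1 ≤ k * ε := by rwa [inv_le_iff_one_le_mul₀ hε] at hk
  have hk0 : 0 < k := (inv_pos.mpr hε).trans_le hk
  nlinarith

/-- Every graph with n vertices and minimum degree at least εn admits
a covering of its edge set by ℓ < ε⁻¹ sets, each of diameter at most 6. -/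
theorem stmt_15 {V : Type*} [Fintype V] (G : SimpleGraph V) (ε : ℝ) (hε : 0 < ε)
    (n : ℕ) (hn : n = Fintype.card V)
    (hdeg : ∀ v : V, ε * n ≤ ((G.neighborSet v).ncard : ℝ)) :
    ∃ (l : ℕ) (E : Fin l → Set (Sym2 V)),
      (l : ℝ) < ε⁻¹ ∧ (⋃ i, E i) = G.edgeSet ∧ ∀ i, EdgeSetDiamLE (E i) 6 := by
  classical
  obtain ⟨S, hS, hcov⟩ := G.exists_pairwise_lt_edist_forall_edist_le 2
  set T := S.toFinset
  have hT : (T : Set V).Pairwise fun u w ↦ 2 < G.edist u w := by rwa [Set.coe_toFinset]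
  have hcard : (T.card : ℝ) * (ε * n + 1) ≤ n := by
    have hsum : ∑ v ∈ T, ((G.degree v : ℝ) + 1) ≤ n := by
      exact_mod_cast hn ▸ G.sum_degree_add_one_le_card hT
    refine le_trans ?_ hsum
    rw [← nsmul_eq_mul, ← Finset.sum_const]
    refine Finset.sum_le_sum fun v _ ↦ add_le_add_left ?_ 1
    simpa [G.ncard_neighborSet_eq_degree] using hdeg v
  refine ⟨T.card, fun i ↦ G.closedBallEdges (T.equivFin.symm i) 3,
    lt_inv_of_mul_add_one_le hε n.cast_nonneg hcard, ?_,
    fun i ↦ G.edgeSetDiamLE_closedBallEdges _ 3⟩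
  refine G.iUnion_closedBallEdges_eq_edgeSet _ 2 fun x ↦ ?_
  obtain ⟨v, hv, hxv⟩ := hcov x
  exact ⟨T.equivFin ⟨v, Set.mem_toFinset.mpr hv⟩, by simpa using hxv⟩
end
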